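/- arXiv:1911.04079 — 8 statements merged into one kernel-verified Lean document; each statement's English description precedes it below -/
import Mathlib

section
/- Let N = {1,…,2n} carry a coloring with exactly n black and n white nodes. If ρ is a pairing of N that is both black-white and odd-even, then sign_OE(ρ) = sign_BW(ρ). -/
namespace DD

/-- The node set `{1, …, 2n}`. -/
def nodes (n : ℕ) : Finset ℕ := Finset.Icc 1 (2 * n)

/-- `ρ` is a pairing of `{1,…,2n}`: a fixed-point-free involution of the node set. -/
structure IsPairing (n : ℕ) (ρ : ℕ → ℕ) : Prop where
  maps : ∀ i ∈ nodes n, ρ i ∈ nodes n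
  invol : ∀ i ∈ nodes n, ρ (ρ i) = i
  nofix : ∀ i ∈ nodes n, ρ i ≠ i

/-- Number of crossings of `ρ` among pairs of `ρ` contained in `A`:
a crossing is a pair of pairs `(a,c)`, `(b,d)` of `ρ` with `a < b < c < d`. -/
def numCrossingsOn (A : Finset ℕ) (ρ : ℕ → ℕ) : ℕ :=
  ((A ×ˢ A).filter (fun p => p.1 < p.2 ∧ p.2 < ρ p.1 ∧ ρ p.1 < ρ p.2)).card

/-- Number of crossings of a pairing of `{1,…,2n}`. -/
def numCrossings (n : ℕ) (ρ : ℕ → ℕ) : ℕ := numCrossingsOn (nodes n) ρ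

/-- A pairing is planar if it has no crossings. -/
def IsPlanar (n : ℕ) (ρ : ℕ → ℕ) : Prop := numCrossings n ρ = 0

/-- A coloring `c : ℕ → Bool` of the nodes: `true` = black, `false` = white.
A black-white pairing pairs each black node with a white node. -/
def IsBW (n : ℕ) (c : ℕ → Bool) (ρ : ℕ → ℕ) : Prop :=
  ∀ i ∈ nodes n, c (ρ i) = !(c i)

/-- An odd-even pairing pairs each odd node with an even node. -/
def IsOE (n : ℕ) (ρ : ℕ → ℕ) : Prop :=
  ∀ i ∈ nodes n, ρ i % 2 ≠ i % 2

/-- The coloring has exactly `n` black (hence exactly `n` white) nodes. -/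
def BalancedColoring (n : ℕ) (c : ℕ → Bool) : Prop :=
  ((nodes n).filter (fun i => c i = true)).card = n

/-- The black nodes. -/
def blacks (n : ℕ) (c : ℕ → Bool) : Finset ℕ := (nodes n).filter (fun i => c i = true)

/-- The white nodes. -/
def whites (n : ℕ) (c : ℕ → Bool) : Finset ℕ := (nodes n).filter (fun i => c i = false)

/-- `sign_BW(ρ)`: the sign of the permutation sending `i` to the rank of `w_i = ρ(b_i)`
among the white nodes, computed as `(-1)` to the number of inversions, i.e. the number of
pairs of black nodes `b < b'` with `ρ b > ρ b'`. -/
def signBW (n : ℕ) (c : ℕ → Bool) (ρ : ℕ → ℕ) : ℤ :=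
  (-1 : ℤ) ^ (((nodes n ×ˢ nodes n).filter
    (fun p => c p.1 = true ∧ c p.2 = true ∧ p.1 < p.2 ∧ ρ p.2 < ρ p.1)).card)

/-- `sign_OE(π)`: the sign of the permutation sending `i` to `π(2i−1)/2`, computed as
`(-1)` to the number of pairs of odd nodes `a < b` with `π a > π b`. -/
def signOE (n : ℕ) (π : ℕ → ℕ) : ℤ :=
  (-1 : ℤ) ^ (((nodes n ×ˢ nodes n).filter
    (fun p => p.1 % 2 = 1 ∧ p.2 % 2 = 1 ∧ p.1 < p.2 ∧ π p.2 < π p.1)).card)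

/-- `a_{b,w}`: the number of indices `i` with `min b w ≤ i < max b w` such that nodes `i`
and `i+1` have the same color. -/
def aCount (c : ℕ → Bool) (b w : ℕ) : ℕ :=
  ((Finset.Ico (min b w) (max b w)).filter (fun i => c i = c (i + 1))).card

/-- `sign(b,w) = (−1)^{(|b−w| + a_{b,w} − 1)/2}` for a black node `b` and white node `w`. -/
def pairSign (c : ℕ → Bool) (b w : ℕ) : ℤ :=
  (-1 : ℤ) ^ ((max b w - min b w + aCount c b w - 1) / 2)

/-- Cyclic successor of node `m` in `{1,…,2n}`. -/
def nextNode (n m : ℕ) : ℕ := if m = 2 * n then 1 else m + 1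

/-- Couples of consecutive nodes of the same color, cyclically: indices `m ∈ {1,…,2n}`
with nodes `m` and `m+1` (cyclically) of the same color. -/
def couples (n : ℕ) (c : ℕ → Bool) : Finset ℕ :=
  (nodes n).filter (fun m => c m = c (nextNode n m))

/-- The value `φ(m)` for a couple `m`: writing `r` for the rank of `m` among couples of its
own color, `φ(m) = 2r` if `m` has the same color as node `1`, and `φ(m) = 2r − 1` otherwise. -/
def phiCouple (n : ℕ) (c : ℕ → Bool) (m : ℕ) : ℕ :=
  if c m = c 1 then 2 * ((couples n c).filter (fun m' => c m' = c m ∧ m' ≤ m)).card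
  else 2 * ((couples n c).filter (fun m' => c m' = c m ∧ m' ≤ m)).card - 1

/-- `sign_cons(N)`: the sign of the one-line permutation `(φ(n₁),…,φ(n_{2k}))`, computed
as `(-1)` to its number of inversions. -/
def signCons (n : ℕ) (c : ℕ → Bool) : ℤ :=
  (-1 : ℤ) ^ (((couples n c ×ˢ couples n c).filter
    (fun p => p.1 < p.2 ∧ phiCouple n c p.2 < phiCouple n c p.1)).card)

/-- The set `T` of nodes that are odd and white, or even and black. -/
def Tset (n : ℕ) (c : ℕ → Bool) : Finset ℕ :=
  (nodes n).filter (fun i => (i % 2 = 1 ∧ c i = false) ∨ (i % 2 = 0 ∧ c i = true))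

/-- A subset is balanced if it contains equally many black and white nodes. -/
def BalancedSubset (c : ℕ → Bool) (S : Finset ℕ) : Prop :=
  (S.filter (fun i => c i = true)).card = (S.filter (fun i => c i = false)).card

/-- `ρ` does not connect `S` to its complement: `ρ(S) = S`. -/
def Invariant (S : Finset ℕ) (ρ : ℕ → ℕ) : Prop := ∀ i ∈ S, ρ i ∈ S

/-- Reachability under the subgroup generated by the involutions `π` and `ρ`. -/
def compRel (n : ℕ) (π ρ : ℕ → ℕ) (a b : ℕ) : Prop :=
  Relation.ReflTransGen (fun u v => u ∈ nodes n ∧ (v = π u ∨ v = ρ u)) a b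

open scoped Classical in
/-- The number of components (orbits) of `π ∪ ρ` on the node set. -/
noncomputable def numComponents (n : ℕ) (π ρ : ℕ → ℕ) : ℕ :=
  ((nodes n).image (fun a => (nodes n).filter (fun b => compRel n π ρ a b))).card

/-! Orient every pair of `ρ` from the endpoint where `q` holds, with `q` "is black" or "is odd";
both signs count inversions between the sources of the pairs. Two pairs form an inversion when
they are nested, never when they are disjoint, and, when they cross, exactly when `q` disagrees
on their left endpoints. Hence the number of inversions has the parity of the number of nestings
plus the number of crossing pairs whose left endpoints `q` separates. Since `ρ` is odd-even, each
pair encloses an even number of nodes and so crosses an even number of pairs; in a graph with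
even degrees every cut has an even number of edges. -/

open Finset

theorem even_card_of_involution {α : Type*} [LinearOrder α] {s : Finset α} {f : α → α}
    (hmaps : ∀ x ∈ s, f x ∈ s) (hinv : ∀ x ∈ s, f (f x) = x) (hfix : ∀ x ∈ s, f x ≠ x) :
    Even #s := by
  have hswap : #(s.filter fun x => ¬ x < f x) = #(s.filter fun x => x < f x) := by
    apply card_nbij' f f
    · intro x hx
      simp only [mem_coe, mem_filter] at hx ⊢
      refine ⟨hmaps x hx.1, ?_⟩
      rw [hinv x hx.1]
      exact lt_of_le_of_ne (not_lt.mp hx.2) (hfix x hx.1)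
    · intro x hx
      simp only [mem_coe, mem_filter] at hx ⊢
      exact ⟨hmaps x hx.1, by rw [hinv x hx.1]; exact hx.2.le.not_gt⟩
    · intro x hx; exact hinv x (mem_filter.mp hx).1
    · intro x hx; exact hinv x (mem_filter.mp hx).1
  rw [← card_filter_add_card_filter_not (fun x => x < f x), hswap]
  exact ⟨_, rfl⟩

theorem even_card_filter_cut {α : Type*} [DecidableEq α] {s : Finset α} {E : Finset (α × α)}
    (hE : E ⊆ s ×ˢ s) (q : α → Prop) [DecidablePred q]
    (hdeg : ∀ u ∈ s, Even (#(E.filter (·.1 = u)) + #(E.filter (·.2 = u)))) :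
    Even #(E.filter fun e => ¬(q e.1 ↔ q e.2)) := by
  have hfib (g : α × α → α) (hg : ∀ e ∈ E, g e ∈ s) :
      #(E.filter (q ∘ g)) = ∑ u ∈ s.filter q, #(E.filter (g · = u)) := by
    rw [card_eq_sum_card_fiberwise (f := g) (t := s.filter q)]
    · refine sum_congr rfl fun u hu => ?_
      rw [filter_filter]
      congr 1
      ext e
      simp only [mem_filter, Function.comp_apply]
      exact ⟨fun h => ⟨h.1, h.2.2⟩, fun h => ⟨h.1, h.2 ▸ (mem_filter.mp hu).2, h.2⟩⟩
    · intro e he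
      exact mem_filter.mpr ⟨hg e (mem_filter.mp he).1, (mem_filter.mp he).2⟩
  have hsum : ∑ u ∈ s.filter q, (#(E.filter (·.1 = u)) + #(E.filter (·.2 = u)))
      = 2 * #(E.filter fun e => q e.1 ∧ q e.2) + #(E.filter fun e => ¬(q e.1 ↔ q e.2)) := by
    rw [sum_add_distrib, ← hfib Prod.fst fun e he => (mem_product.mp (hE he)).1,
      ← hfib Prod.snd fun e he => (mem_product.mp (hE he)).2]
    simp only [card_filter, mul_sum, ← sum_add_distrib, Function.comp_apply]
    refine sum_congr rfl fun e _ => ?_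
    by_cases h1 : q e.1 <;> by_cases h2 : q e.2 <;> simp [h1, h2]
  have heven : Even (∑ u ∈ s.filter q, (#(E.filter (·.1 = u)) + #(E.filter (·.2 = u)))) :=
    even_sum _ fun u hu => hdeg u (mem_filter.mp hu).1
  rw [hsum] at heven
  exact (Nat.even_add.mp heven).mp (even_two_mul _)

theorem card_filter_asymm {α : Type*} [LinearOrder α] (s : Finset α) {r : α → α → Prop}
    [DecidableRel r] (hr : ∀ a b, r a b → ¬ r b a) :
    #((s ×ˢ s).filter fun p => r p.1 p.2)
      = #((s ×ˢ s).filter fun p => p.1 < p.2 ∧ (r p.1 p.2 ∨ r p.2 p.1)) := by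
  have hne : ∀ a b, r a b → a ≠ b := fun a b h hab => hr a b h (hab ▸ h)
  apply card_nbij' (fun p => if p.1 < p.2 then p else p.swap)
    (fun p => if r p.1 p.2 then p else p.swap)
  · rintro ⟨a, b⟩ h
    simp only [mem_coe, mem_filter, mem_product] at h
    have := hne a b h.2
    dsimp only
    split_ifs with hab
    · simp_all
    · have hba : b < a := lt_of_le_of_ne (not_lt.mp hab) this.symm
      simp_all
  · rintro ⟨a, b⟩ h
    simp only [mem_coe, mem_filter, mem_product] at h
    rcases h.2.2 with h' | h' <;> simp_all [hr a b]
  · rintro ⟨a, b⟩ h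
    simp only [mem_coe, mem_filter, mem_product] at h
    have := hne a b h.2
    dsimp only
    split_ifs <;> simp_all
  · rintro ⟨a, b⟩ h
    simp only [mem_coe, mem_filter, mem_product] at h
    rcases h.2.2 with h' | h' <;> simp_all [hr a b, h.2.1.not_gt]

section Chords

variable {n : ℕ} {ρ : ℕ → ℕ} {q : ℕ → Prop} [DecidablePred q]

def leftEnds (n : ℕ) (ρ : ℕ → ℕ) : Finset ℕ := (nodes n).filter fun u => u < ρ u

/-- `q` holds at exactly one end of each pair, which orients the pair from that end,
its `source`. -/
def IsOrientation (n : ℕ) (ρ : ℕ → ℕ) (q : ℕ → Prop) : Prop := ∀ i ∈ nodes n, q (ρ i) ↔ ¬ q i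

def source (ρ : ℕ → ℕ) (q : ℕ → Prop) [DecidablePred q] (u : ℕ) : ℕ := if q u then u else ρ u

def inversions (n : ℕ) (ρ : ℕ → ℕ) (q : ℕ → Prop) [DecidablePred q] : Finset (ℕ × ℕ) :=
  (nodes n ×ˢ nodes n).filter fun p => q p.1 ∧ q p.2 ∧ p.1 < p.2 ∧ ρ p.2 < ρ p.1

def nestings (n : ℕ) (ρ : ℕ → ℕ) : Finset (ℕ × ℕ) :=
  (leftEnds n ρ ×ˢ leftEnds n ρ).filter fun p => p.1 < p.2 ∧ ρ p.2 < ρ p.1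

def crossings (n : ℕ) (ρ : ℕ → ℕ) : Finset (ℕ × ℕ) :=
  (leftEnds n ρ ×ˢ leftEnds n ρ).filter fun p => p.1 < p.2 ∧ p.2 < ρ p.1 ∧ ρ p.1 < ρ p.2

lemma min_mem_leftEnds (hρ : IsPairing n ρ) {a : ℕ} (ha : a ∈ nodes n) :
    min a (ρ a) ∈ leftEnds n ρ := by
  rcases (hρ.nofix a ha).lt_or_gt with h | h
  · rw [min_eq_right h.le]
    exact mem_filter.mpr ⟨hρ.maps a ha, by rwa [hρ.invol a ha]⟩
  · rw [min_eq_left h.le]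
    exact mem_filter.mpr ⟨ha, h⟩

lemma source_mem (hρ : IsPairing n ρ) (hq : IsOrientation n ρ q) {u : ℕ}
    (hu : u ∈ leftEnds n ρ) : source ρ q u ∈ nodes n ∧ q (source ρ q u) := by
  have hun := (mem_filter.mp hu).1
  unfold source
  split_ifs with h
  · exact ⟨hun, h⟩
  · exact ⟨hρ.maps u hun, (hq u hun).mpr h⟩

lemma min_source (hρ : IsPairing n ρ) {u : ℕ} (hu : u ∈ leftEnds n ρ) :
    min (source ρ q u) (ρ (source ρ q u)) = u := by
  obtain ⟨hun, hlt⟩ := mem_filter.mp hu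
  unfold source
  split_ifs
  · exact min_eq_left hlt.le
  · rw [hρ.invol u hun]; exact min_eq_right hlt.le

lemma source_min (hρ : IsPairing n ρ) (hq : IsOrientation n ρ q) {a : ℕ} (ha : a ∈ nodes n)
    (hqa : q a) : source ρ q (min a (ρ a)) = a := by
  unfold source
  rcases (hρ.nofix a ha).lt_or_gt with h | h
  · rw [min_eq_right h.le, if_neg fun h => (hq a ha).mp h hqa, hρ.invol a ha]
  · rw [min_eq_left h.le, if_pos hqa]

def SourcesInverted (ρ : ℕ → ℕ) (q : ℕ → Prop) [DecidablePred q] (u v : ℕ) : Prop :=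
  source ρ q u < source ρ q v ∧ ρ (source ρ q v) < ρ (source ρ q u)

instance : DecidableRel (SourcesInverted ρ q) := fun _ _ => by
  unfold SourcesInverted; infer_instance

lemma card_inversions_eq_card_sourcesInverted (hρ : IsPairing n ρ) (hq : IsOrientation n ρ q) :
    #(inversions n ρ q)
      = #((leftEnds n ρ ×ˢ leftEnds n ρ).filter fun p => SourcesInverted ρ q p.1 p.2) := by
  apply card_nbij' (fun p => (min p.1 (ρ p.1), min p.2 (ρ p.2)))
    (fun p => (source ρ q p.1, source ρ q p.2))
  · rintro ⟨a, b⟩ h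
    simp only [inversions, mem_coe, mem_filter, mem_product] at h ⊢
    obtain ⟨⟨ha, hb⟩, hqa, hqb, hab⟩ := h
    refine ⟨⟨min_mem_leftEnds hρ ha, min_mem_leftEnds hρ hb⟩, ?_⟩
    unfold SourcesInverted
    rwa [source_min hρ hq ha hqa, source_min hρ hq hb hqb]
  · rintro ⟨u, v⟩ h
    simp only [inversions, mem_coe, mem_filter, mem_product] at h ⊢
    obtain ⟨⟨hu, hv⟩, h⟩ := h
    obtain ⟨hsu, hqu⟩ := source_mem hρ hq hu
    obtain ⟨hsv, hqv⟩ := source_mem hρ hq hv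
    exact ⟨⟨hsu, hsv⟩, hqu, hqv, h⟩
  · rintro ⟨a, b⟩ h
    simp only [inversions, mem_coe, mem_filter, mem_product] at h
    simp only [source_min hρ hq h.1.1 h.2.1, source_min hρ hq h.1.2 h.2.2.1]
  · rintro ⟨u, v⟩ h
    simp only [mem_coe, mem_filter, mem_product] at h
    simp only [min_source hρ h.1.1, min_source hρ h.1.2]

lemma sourcesInverted_or_iff (hρ : IsPairing n ρ) {u v : ℕ} (hu : u ∈ leftEnds n ρ)
    (hv : v ∈ leftEnds n ρ) (huv : u < v) :
    SourcesInverted ρ q u v ∨ SourcesInverted ρ q v u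
      ↔ ρ v < ρ u ∨ (v < ρ u ∧ ρ u < ρ v ∧ ¬(q u ↔ q v)) := by
  obtain ⟨hun, hu⟩ := mem_filter.mp hu
  obtain ⟨hvn, hv⟩ := mem_filter.mp hv
  have hρu := hρ.invol u hun
  have hρv := hρ.invol v hvn
  have hvρu : v ≠ ρ u := fun h => by rw [← h] at hρu; omega
  have hρuv : ρ u ≠ ρ v := fun h => by rw [h, hρv] at hρu; omega
  unfold SourcesInverted source
  by_cases hqu : q u <;> by_cases hqv : q v <;>
    simp only [hqu, hqv, hρu, hρv, ↓reduceIte, iff_true, iff_false, not_true_eq_false,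
      not_false_eq_true, and_true, and_false, or_false] <;>
    omega

lemma card_inversions (hρ : IsPairing n ρ) (hq : IsOrientation n ρ q) :
    #(inversions n ρ q)
      = #(nestings n ρ) + #((crossings n ρ).filter fun p => ¬(q p.1 ↔ q p.2)) := by
  have hasymm : ∀ u v, SourcesInverted ρ q u v → ¬ SourcesInverted ρ q v u :=
    fun u v h h' => lt_asymm h.1 h'.1
  rw [card_inversions_eq_card_sourcesInverted hρ hq, card_filter_asymm _ hasymm, nestings,
    crossings, filter_filter, ← card_union_of_disjoint, ← filter_or]
  · congr 1
    refine filter_congr fun p hp => ?_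
    rw [mem_product] at hp
    by_cases huv : p.1 < p.2
    · simp only [huv, true_and, and_assoc, sourcesInverted_or_iff hρ hp.1 hp.2 huv]
    · simp only [huv, false_and, or_false]
  · refine disjoint_filter.mpr fun p _ h h' => ?_
    omega

lemma mem_nodes_of_mem_Ioo (hρ : IsPairing n ρ) {u x : ℕ} (hu : u ∈ nodes n)
    (hx : x ∈ Ioo u (ρ u)) : x ∈ nodes n := by
  have := hρ.maps u hu
  simp only [nodes, mem_Icc, mem_Ioo] at hu hx this ⊢
  omega

lemma card_crossings_filter_fst (hρ : IsPairing n ρ) {u : ℕ} (hu : u ∈ leftEnds n ρ) :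
    #((crossings n ρ).filter (·.1 = u)) = #((Ioo u (ρ u)).filter fun x => ρ u < ρ x) := by
  obtain ⟨hun, hlt⟩ := mem_filter.mp hu
  apply card_nbij' Prod.snd (fun x => (u, x))
  · rintro ⟨a, b⟩ h
    simp only [crossings, mem_coe, mem_filter, mem_product, mem_Ioo] at h ⊢
    obtain ⟨⟨_, hab, hba, hρab⟩, rfl⟩ := h
    exact ⟨⟨hab, hba⟩, hρab⟩
  · intro x hx
    simp only [crossings, mem_coe, mem_filter, mem_product] at hx ⊢
    have hxn := mem_nodes_of_mem_Ioo hρ hun hx.1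
    rw [mem_Ioo] at hx
    exact ⟨⟨⟨hu, mem_filter.mpr ⟨hxn, by omega⟩⟩, hx.1.1, hx.1.2, hx.2⟩, trivial⟩
  · rintro ⟨a, b⟩ h
    simp only [mem_coe, mem_filter] at h
    simp [h.2]
  · intro x _
    rfl

lemma card_crossings_filter_snd (hρ : IsPairing n ρ) {u : ℕ} (hu : u ∈ leftEnds n ρ) :
    #((crossings n ρ).filter (·.2 = u)) = #((Ioo u (ρ u)).filter fun x => ρ x < u) := by
  obtain ⟨hun, hlt⟩ := mem_filter.mp hu
  apply card_nbij' (fun p => ρ p.1) (fun x => (ρ x, u))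
  · rintro ⟨a, b⟩ h
    simp only [crossings, leftEnds, mem_coe, mem_filter, mem_product, mem_Ioo] at h ⊢
    obtain ⟨⟨⟨⟨han, _⟩, _⟩, hab, hba, hρab⟩, rfl⟩ := h
    rw [hρ.invol a han]
    exact ⟨⟨hba, hρab⟩, hab⟩
  · intro x hx
    simp only [crossings, mem_coe, mem_filter, mem_product] at hx ⊢
    have hxn := mem_nodes_of_mem_Ioo hρ hun hx.1
    have hρx := hρ.invol x hxn
    rw [mem_Ioo] at hx
    refine ⟨⟨⟨mem_filter.mpr ⟨hρ.maps x hxn, ?_⟩, hu⟩, ?_⟩, trivial⟩ <;> omega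
  · rintro ⟨a, b⟩ h
    simp only [crossings, mem_coe, mem_filter, mem_product] at h
    simp [hρ.invol a (mem_filter.mp h.1.1.1).1, h.2]
  · intro x hx
    simp only [mem_coe, mem_filter] at hx
    simp [hρ.invol x (mem_nodes_of_mem_Ioo hρ hun hx.1)]

lemma even_card_filter_not_mem_Ioo (hρ : IsPairing n ρ) (hoe : IsOE n ρ) {u : ℕ}
    (hu : u ∈ leftEnds n ρ) : Even #((Ioo u (ρ u)).filter fun x => ρ x ∉ Ioo u (ρ u)) := by
  obtain ⟨hun, hlt⟩ := mem_filter.mp hu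
  have hI : Even #(Ioo u (ρ u)) := by
    have := hoe u hun
    rw [Nat.card_Ioo, Nat.even_iff]
    omega
  have hinside : Even #((Ioo u (ρ u)).filter fun x => ρ x ∈ Ioo u (ρ u)) := by
    refine even_card_of_involution (f := ρ) (fun x hx => ?_) (fun x hx => ?_) (fun x hx => ?_)
    all_goals obtain ⟨hxI, hρxI⟩ := mem_filter.mp hx
    · exact mem_filter.mpr ⟨hρxI, by rwa [hρ.invol x (mem_nodes_of_mem_Ioo hρ hun hxI)]⟩
    · exact hρ.invol x (mem_nodes_of_mem_Ioo hρ hun hxI)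
    · exact hρ.nofix x (mem_nodes_of_mem_Ioo hρ hun hxI)
  rw [← card_filter_add_card_filter_not (fun x => ρ x ∈ Ioo u (ρ u))] at hI
  exact (Nat.even_add.mp hI).mp hinside

lemma even_degree_crossings (hρ : IsPairing n ρ) (hoe : IsOE n ρ) {u : ℕ}
    (hu : u ∈ leftEnds n ρ) :
    Even (#((crossings n ρ).filter (·.1 = u)) + #((crossings n ρ).filter (·.2 = u))) := by
  obtain ⟨hun, hlt⟩ := mem_filter.mp hu
  rw [card_crossings_filter_fst hρ hu, card_crossings_filter_snd hρ hu,
    ← card_union_of_disjoint (disjoint_filter.mpr fun x _ h h' => by omega), ← filter_or]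
  convert even_card_filter_not_mem_Ioo hρ hoe hu using 2
  refine filter_congr fun x hx => ?_
  have hρx := hρ.invol x (mem_nodes_of_mem_Ioo hρ hun hx)
  have hρu := hρ.invol u hun
  rw [mem_Ioo] at hx ⊢
  have hxu : ρ x ≠ u := fun h => by have := congrArg ρ h; rw [hρx] at this; omega
  have hxρu : ρ x ≠ ρ u := fun h => by have := congrArg ρ h; rw [hρx, hρu] at this; omega
  omega

theorem even_card_inversions_iff (hρ : IsPairing n ρ) (hoe : IsOE n ρ)
    (hq : IsOrientation n ρ q) : Even #(inversions n ρ q) ↔ Even #(nestings n ρ) := by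
  have hcut : Even #((crossings n ρ).filter fun p => ¬(q p.1 ↔ q p.2)) :=
    even_card_filter_cut (filter_subset _ _) q fun u hu => even_degree_crossings hρ hoe hu
  rw [card_inversions hρ hq, Nat.even_add, iff_true_right hcut]

end Chords

theorem statement4_general (n : ℕ) (c : ℕ → Bool)
    (ρ : ℕ → ℕ) (hρ : IsPairing n ρ) (hbw : IsBW n c ρ) (hoe : IsOE n ρ) :
    signOE n ρ = signBW n c ρ := by
  have hodd : IsOrientation n ρ (· % 2 = 1) := fun i hi => by have := hoe i hi; omega
  have hblack : IsOrientation n ρ (c · = true) := fun i hi => by simp [hbw i hi]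
  calc signOE n ρ = (-1) ^ #(inversions n ρ (· % 2 = 1)) := rfl
    _ = (-1) ^ #(inversions n ρ (c · = true)) := neg_one_pow_congr <|
      (even_card_inversions_iff hρ hoe hodd).trans (even_card_inversions_iff hρ hoe hblack).symm
    _ = signBW n c ρ := rfl

/-- Lemma 2.1.2: if `ρ` is both a black-white pairing and an odd-even
pairing, then `sign_OE(ρ) = sign_BW(ρ)`. -/
theorem statement4 (n : ℕ) (c : ℕ → Bool) (hbal : BalancedColoring n c)
    (ρ : ℕ → ℕ) (hρ : IsPairing n ρ) (hbw : IsBW n c ρ) (hoe : IsOE n ρ) :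
    signOE n ρ = signBW n c ρ :=
  statement4_general n c ρ hρ hbw hoe

end DD
end

section
/- Let N = {1,…,2n} carry a coloring with exactly n black and n white nodes. Let x < y be white nodes such that every node strictly between x and y is black, and set ℓ = y − x − 1 ≥ 1. If b is a black node with b < x or b > y, then sign(b, x) = (−1)^ℓ · sign(b, y). -/
namespace DD

/-! Write `L(u, v) = |u - v| + a_{u,v}` (`pairLength`), so that
`sign(u, v) = (-1)^((L(u, v) - 1) / 2)`. Same-colour steps are additive along a segment, hence
so is `L`, and on the run `x, x+1, …, y` the only steps between different colours are the first
and the last, so `L(x, y) = 2ℓ`.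
Thus moving the white endpoint from `x` to `y` (or back) adds `2ℓ` to `L`, multiplying the
sign by `(-1)^ℓ`. -/

def pairLength (c : ℕ → Bool) (u v : ℕ) : ℕ := max u v - min u v + aCount c u v

section

variable (c : ℕ → Bool)

theorem pairSign_eq (u v : ℕ) : pairSign c u v = (-1 : ℤ) ^ ((pairLength c u v - 1) / 2) := rfl

theorem aCount_comm (u v : ℕ) : aCount c u v = aCount c v u := by
  rw [aCount, aCount, min_comm, max_comm]

theorem pairLength_comm (u v : ℕ) : pairLength c u v = pairLength c v u := by
  rw [pairLength, pairLength, min_comm, max_comm, aCount_comm]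

theorem pairSign_comm (u v : ℕ) : pairSign c u v = pairSign c v u := by
  rw [pairSign_eq, pairSign_eq, pairLength_comm]

theorem aCount_of_le {u v : ℕ} (h : u ≤ v) :
    aCount c u v = ((Finset.Ico u v).filter (fun i => c i = c (i + 1))).card := by
  rw [aCount, min_eq_left h, max_eq_right h]

theorem aCount_add {u v w : ℕ} (huv : u ≤ v) (hvw : v ≤ w) :
    aCount c u w = aCount c u v + aCount c v w := by
  rw [aCount_of_le c (huv.trans hvw), aCount_of_le c huv, aCount_of_le c hvw,
    ← Finset.card_union_of_disjoint
      (Finset.disjoint_filter_filter (Finset.Ico_disjoint_Ico_consecutive u v w)),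
    ← Finset.filter_union, Finset.Ico_union_Ico_eq_Ico huv hvw]

theorem pairLength_add {u v w : ℕ} (huv : u ≤ v) (hvw : v ≤ w) :
    pairLength c u w = pairLength c u v + pairLength c v w := by
  simp only [pairLength, aCount_add c huv hvw, min_eq_left, max_eq_right, huv, hvw,
    huv.trans hvw]
  omega

theorem aCount_of_run {x y : ℕ} {a : Bool} (hx : c x = a) (hy : c y = a)
    (hmid : ∀ i, x < i → i < y → c i = !a) (hxy : x + 2 ≤ y) :
    aCount c x y = y - x - 2 := by
  have hsame : (Finset.Ico x y).filter (fun i => c i = c (i + 1)) = Finset.Ico (x + 1) (y - 1) := by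
    ext i
    simp only [Finset.mem_filter, Finset.mem_Ico]
    constructor
    · rintro ⟨⟨hxi, hiy⟩, hci⟩
      by_contra hout
      obtain rfl | rfl : i = x ∨ i + 1 = y := by omega
      · rw [hx, hmid (i + 1) (by omega) (by omega)] at hci
        cases a <;> simp at hci
      · rw [hy, hmid i (by omega) (by omega)] at hci
        cases a <;> simp at hci
    · rintro ⟨hxi, hiy⟩
      refine ⟨⟨by omega, by omega⟩, ?_⟩
      rw [hmid i (by omega) (by omega), hmid (i + 1) (by omega) (by omega)]
  rw [aCount_of_le c (by omega), hsame, Nat.card_Ico]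
  omega

theorem pairLength_of_run {x y : ℕ} {a : Bool} (hx : c x = a) (hy : c y = a)
    (hmid : ∀ i, x < i → i < y → c i = !a) (hxy : x + 2 ≤ y) :
    pairLength c x y = 2 * (y - x - 1) := by
  rw [pairLength, aCount_of_run c hx hy hmid hxy, min_eq_left (by omega), max_eq_right (by omega)]
  omega

theorem pairSign_of_pairLength_eq_add {u v u' v' k : ℕ} (huv : u ≠ v)
    (h : pairLength c u' v' = pairLength c u v + 2 * k) :
    pairSign c u' v' = (-1 : ℤ) ^ k * pairSign c u v := by
  have hpos : 1 ≤ pairLength c u v := by unfold pairLength; omega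
  rw [pairSign_eq, pairSign_eq, h, Nat.sub_add_comm hpos, Nat.add_mul_div_left _ _ two_pos,
    pow_add, mul_comm]

theorem neg_one_pow_mul_pairSign_of_pairLength_eq_add {u v u' v' k : ℕ} (huv : u ≠ v)
    (h : pairLength c u' v' = pairLength c u v + 2 * k) :
    (-1 : ℤ) ^ k * pairSign c u' v' = pairSign c u v := by
  rw [pairSign_of_pairLength_eq_add c huv h, ← mul_assoc, ← pow_add, ← two_mul, pow_mul,
    neg_one_sq, one_pow, one_mul]

end

theorem statement6_general (c : ℕ → Bool)
    (x y b : ℕ)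
    (hcx : c x = false) (hcy : c y = false)
    (hmid : ∀ i, x < i → i < y → c i = true)
    (hl : 1 ≤ y - x - 1)
    (hbout : b < x ∨ y < b) :
    pairSign c b x = (-1 : ℤ) ^ (y - x - 1) * pairSign c b y := by
  have hrun : pairLength c x y = 2 * (y - x - 1) := pairLength_of_run c hcx hcy hmid (by omega)
  rcases hbout with hbx | hyb
  · refine (neg_one_pow_mul_pairSign_of_pairLength_eq_add c hbx.ne ?_).symm
    rw [pairLength_add c hbx.le (by omega), hrun]
  · rw [pairSign_comm c b x, pairSign_comm c b y]
    refine pairSign_of_pairLength_eq_add c (by omega) ?_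
    rw [pairLength_add c (by omega) hyb.le, hrun, add_comm]

/-- Lemma 2.1.24: `x < y` white with all `ℓ ≥ 1` nodes strictly between
them black; for a black node `b` outside `[x+1, y−1]`, `sign(b,x) = (−1)^ℓ sign(b,y)`. -/
theorem statement6 (n : ℕ) (c : ℕ → Bool) (hbal : BalancedColoring n c)
    (x y b : ℕ) (hx : x ∈ nodes n) (hy : y ∈ nodes n) (hb : b ∈ nodes n)
    (hxy : x < y) (hcx : c x = false) (hcy : c y = false)
    (hmid : ∀ i, x < i → i < y → c i = true)
    (hl : 1 ≤ y - x - 1)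
    (hcb : c b = true) (hbout : b < x ∨ y < b) :
    pairSign c b x = (-1 : ℤ) ^ (y - x - 1) * pairSign c b y :=
  statement6_general c x y b hcx hcy hmid hl hbout

end DD
end

section
/- Let N = {1,…,2n} carry a coloring with exactly n black and n white nodes. Let x < y be white nodes such that every node strictly between x and y is black, and set ℓ = y − x − 1 ≥ 1. If b is a black node strictly between x and y, say b = x + j with 1 ≤ j ≤ ℓ, then sign(b, x) = (−1)^{ℓ−1} · sign(b, y). -/
namespace DD

/-! Between `x` and `y` the coloring has a single change of color on each side of `b`, so
`a_{b,x} = |b - x| - 1` and `a_{b,y} = |b - y| - 1`. Hence `sign(b,x) = (-1)^{j-1}` and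
`sign(b,y) = (-1)^{ℓ-j}`, and `(ℓ - 1) + (ℓ - j) ≡ j - 1 (mod 2)`. -/

section PairSign

variable {c : ℕ → Bool}

theorem card_sameColor_of_unique_change {p q k : ℕ} (hk : k ∈ Finset.Ico p q)
    (hchange : ∀ i ∈ Finset.Ico p q, c i ≠ c (i + 1) ↔ i = k) :
    ((Finset.Ico p q).filter (fun i => c i = c (i + 1))).card = q - p - 1 := by
  have hsame : (Finset.Ico p q).filter (fun i => c i = c (i + 1)) = (Finset.Ico p q).erase k := by
    ext i
    simp only [Finset.mem_filter, Finset.mem_erase]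
    constructor
    · rintro ⟨hi, hci⟩
      exact ⟨fun hik => (hchange i hi).mpr hik hci, hi⟩
    · rintro ⟨hik, hi⟩
      exact ⟨hi, not_not.mp (mt (hchange i hi).mp hik)⟩
  rw [hsame, Finset.card_erase_of_mem hk, Nat.card_Ico]

theorem pairSign_of_unique_change {b w k : ℕ} (hk : k ∈ Finset.Ico (min b w) (max b w))
    (hchange : ∀ i ∈ Finset.Ico (min b w) (max b w), c i ≠ c (i + 1) ↔ i = k) :
    pairSign c b w = (-1 : ℤ) ^ (max b w - min b w - 1) := by
  have hcount : aCount c b w = max b w - min b w - 1 :=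
    card_sameColor_of_unique_change hk hchange
  have hlt : min b w < max b w := by
    rw [Finset.mem_Ico] at hk
    omega
  rw [pairSign, hcount]
  congr 1
  omega

theorem pairSign_of_run_left {b w : ℕ} (hwb : w < b) (hcw : c w ≠ c b)
    (hrun : ∀ i, w < i → i ≤ b → c i = c b) :
    pairSign c b w = (-1 : ℤ) ^ (b - w - 1) := by
  have h := pairSign_of_unique_change (c := c) (b := b) (w := w) (k := w)
  rw [min_eq_right hwb.le, max_eq_left hwb.le] at h
  refine h (by simpa using hwb) fun i hi => ?_
  rw [Finset.mem_Ico] at hi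
  rcases hi.1.eq_or_lt with rfl | hwi
  · simpa [hrun (w + 1) (by omega) (by omega)] using hcw
  · simp [hrun i hwi (by omega), hrun (i + 1) (by omega) (by omega), hwi.ne']

theorem pairSign_of_run_right {b w : ℕ} (hbw : b < w) (hcw : c w ≠ c b)
    (hrun : ∀ i, b ≤ i → i < w → c i = c b) :
    pairSign c b w = (-1 : ℤ) ^ (w - b - 1) := by
  have h := pairSign_of_unique_change (c := c) (b := b) (w := w) (k := w - 1)
  rw [min_eq_left hbw.le, max_eq_right hbw.le] at h
  refine h (Finset.mem_Ico.mpr ⟨by omega, by omega⟩) fun i hi => ?_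
  rw [Finset.mem_Ico] at hi
  rcases (Nat.le_sub_one_of_lt hi.2).eq_or_lt with rfl | hiw
  · simpa [Nat.sub_add_cancel (Nat.one_le_of_lt hbw), hrun (w - 1) hi.1 hi.2] using hcw.symm
  · simp [hrun i hi.1 hi.2, hrun (i + 1) (by omega) (by omega), hiw.ne]

end PairSign

theorem statement7_general (c : ℕ → Bool)
    (x y b : ℕ)
    (hcx : c x = false) (hcy : c y = false)
    (hmid : ∀ i, x < i → i < y → c i = true)
    (j : ℕ) (hj1 : 1 ≤ j) (hjl : j ≤ y - x - 1) (hbj : b = x + j) :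
    pairSign c b x = (-1 : ℤ) ^ (y - x - 1 - 1) * pairSign c b y := by
  have hcb : c b = true := hmid b (by omega) (by omega)
  have hsignx : pairSign c b x = (-1 : ℤ) ^ (j - 1) := by
    rw [pairSign_of_run_left (by omega) (by simp [hcx, hcb])
      fun i hxi hib => by rw [hcb, hmid i hxi (by omega)]]
    congr 1
    omega
  have hsigny : pairSign c b y = (-1 : ℤ) ^ (y - x - 1 - j) := by
    rw [pairSign_of_run_right (by omega) (by simp [hcy, hcb])
      fun i hbi hiy => by rw [hcb, hmid i (by omega) hiy]]
    congr 1
    omega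
  have hexp : y - x - 1 - 1 + (y - x - 1 - j) = (j - 1) + 2 * (y - x - 1 - j) := by omega
  rw [hsignx, hsigny, ← pow_add, hexp, pow_add, pow_mul, neg_one_sq, one_pow, mul_one]

/-- Lemma 2.1.25: `x < y` white with all `ℓ ≥ 1` nodes strictly between
them black; for a black node `b = x + j` strictly between them,
`sign(b,x) = (−1)^{ℓ−1} sign(b,y)`. -/
theorem statement7 (n : ℕ) (c : ℕ → Bool) (hbal : BalancedColoring n c)
    (x y b : ℕ) (hx : x ∈ nodes n) (hy : y ∈ nodes n) (hb : b ∈ nodes n)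
    (hxy : x < y) (hcx : c x = false) (hcy : c y = false)
    (hmid : ∀ i, x < i → i < y → c i = true)
    (hl : 1 ≤ y - x - 1)
    (hcb : c b = true)
    (j : ℕ) (hj1 : 1 ≤ j) (hjl : j ≤ y - x - 1) (hbj : b = x + j) :
    pairSign c b x = (-1 : ℤ) ^ (y - x - 1 - 1) * pairSign c b y :=
  statement7_general c x y b hcx hcy hmid j hj1 hjl hbj

end DD
end

section
/- Let ρ be a pairing of N = {1,…,2n}, and let x < y be nodes with ρ(x) ≠ y such that no node strictly between x and y is paired with another node strictly between x and y. Let ρ' be the pairing obtained from ρ by swapping the locations of x and y. Then: (1) if ρ(x) and ρ(y) both lie strictly between x and y, the numbers of crossings of ρ and ρ' have opposite parity; (2) if exactly one of ρ(x), ρ(y) lies strictly between x and y, the numbers of crossings of ρ and ρ' have the same parity; (3) if neither ρ(x) nor ρ(y) lies strictly between x and y, the numbers of crossings of ρ and ρ' have opposite parity. -/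
namespace DD

/-!
Work modulo 2. Away from the four nodes `x, y, ρ x, ρ y` the pairings `ρ` and `ρ'` agree, so
crossings between two other pairs cancel. A pair `{f, ρ f}` crosses a pair `{e, e'}` exactly when
one of `e, e'` lies strictly between `f` and `ρ f`; hence it crosses `{x, ρ x}, {y, ρ y}` as often,
modulo 2, as it crosses `{x, ρ y}, {y, ρ x}`, since both count the nodes `x, y, ρ x, ρ y` that it
encloses. What is left is whether `{x, ρ x}` crosses `{y, ρ y}` plus whether `{x, ρ y}` crosses
`{y, ρ x}`, and a check of the relative positions shows this is
`1 + [x < ρ x < y] + [x < ρ y < y]` modulo 2.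
-/

lemma sum_sum_eq_sum_sum_of_subset {α M : Type*} [DecidableEq α] [AddCommMonoid M]
    {A E : Finset α} (g : α → α → M) (hE : E ⊆ A)
    (hout : ∀ a ∈ A \ E, ∀ b ∈ A \ E, g a b = 0)
    (hmix : ∀ a ∈ A \ E, ∑ e ∈ E, (g a e + g e a) = 0) :
    ∑ a ∈ A, ∑ b ∈ A, g a b = ∑ a ∈ E, ∑ b ∈ E, g a b := by
  have hsplit : ∑ a ∈ A, ∑ b ∈ A, g a b = ∑ a ∈ A \ E, ∑ b ∈ A \ E, g a b
      + ∑ a ∈ A \ E, ∑ e ∈ E, (g a e + g e a) + ∑ a ∈ E, ∑ b ∈ E, g a b := by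
    simp only [← Finset.sum_sdiff hE, Finset.sum_add_distrib]
    rw [Finset.sum_comm (s := E) (t := A \ E)]
    abel
  rw [hsplit, Finset.sum_eq_zero fun a ha => Finset.sum_eq_zero (hout a ha),
    Finset.sum_eq_zero hmix, zero_add, zero_add]

def crossingIndicator (σ : ℕ → ℕ) (a b : ℕ) : ZMod 2 :=
  if a < b ∧ b < σ a ∧ σ a < σ b then 1 else 0

section Crossings

variable {n : ℕ} {σ : ℕ → ℕ}

lemma natCast_numCrossingsOn (A : Finset ℕ) (σ : ℕ → ℕ) :
    (numCrossingsOn A σ : ZMod 2) = ∑ a ∈ A, ∑ b ∈ A, crossingIndicator σ a b := by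
  rw [numCrossingsOn, Finset.card_filter, Nat.cast_sum, Finset.sum_product]
  simp only [crossingIndicator, Nat.cast_ite, Nat.cast_one, Nat.cast_zero]

lemma crossingIndicator_self (σ : ℕ → ℕ) (a : ℕ) : crossingIndicator σ a a = 0 := by
  simp [crossingIndicator]

lemma crossingIndicator_apply_right (σ : ℕ → ℕ) (a : ℕ) :
    crossingIndicator σ a (σ a) = 0 := by
  simp [crossingIndicator]

lemma crossingIndicator_apply_left {a : ℕ} (ha : σ (σ a) = a) :
    crossingIndicator σ (σ a) a = 0 := by
  simp [crossingIndicator, ha]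

lemma crossingIndicator_chord {f e : ℕ} (he : σ (σ e) = e)
    (hef : e ≠ f) (heF : e ≠ σ f) (he'f : σ e ≠ f) (he'F : σ e ≠ σ f) :
    crossingIndicator σ f e + crossingIndicator σ e f
      + (crossingIndicator σ f (σ e) + crossingIndicator σ (σ e) f)
      = (if f < e ∧ e < σ f then 1 else 0) + (if f < σ e ∧ σ e < σ f then 1 else 0) := by
  simp only [crossingIndicator, he]
  split_ifs <;> first | decide | (exfalso; omega)

lemma sum_crossingIndicator_add_eq_sum_between (hσ : IsPairing n σ) {E : Finset ℕ}
    (hE : E ⊆ nodes n) (hσE : ∀ e ∈ E, σ e ∈ E) {f : ℕ} (hf : f ∈ nodes n) (hfE : f ∉ E) :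
    ∑ e ∈ E, (crossingIndicator σ f e + crossingIndicator σ e f)
      = ∑ e ∈ E, if f < e ∧ e < σ f then 1 else 0 := by
  have hFE : σ f ∉ E := fun h => hfE (hσ.invol f hf ▸ hσE _ h)
  rw [← sub_eq_zero, ← Finset.sum_sub_distrib]
  refine Finset.sum_involution (fun e _ => σ e) (fun e he => ?_)
    (fun e he _ => hσ.nofix e (hE he)) (fun e he => hσE e he) (fun e he => hσ.invol e (hE he))
  have hσe := hσE e he
  linear_combination crossingIndicator_chord (hσ.invol e (hE he)) (ne_of_mem_of_not_mem he hfE)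
    (ne_of_mem_of_not_mem he hFE) (ne_of_mem_of_not_mem hσe hfE) (ne_of_mem_of_not_mem hσe hFE)

lemma sum_sum_crossingIndicator_two_chords (hσ : IsPairing n σ) {p q : ℕ}
    (hp : p ∈ nodes n) (hq : q ∈ nodes n) (hqp : q ≠ p) (hqp' : q ≠ σ p) :
    ∑ a ∈ {p, q, σ p, σ q}, ∑ b ∈ {p, q, σ p, σ q}, crossingIndicator σ a b
      = (if p < q ∧ q < σ p then 1 else 0) + (if p < σ q ∧ σ q < σ p then 1 else 0)
        + ((if σ p < q ∧ q < p then 1 else 0) + (if σ p < σ q ∧ σ q < p then 1 else 0)) := by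
  have hpp := hσ.invol p hp
  have hqq := hσ.invol q hq
  have hpp' : p ≠ σ p := (hσ.nofix p hp).symm
  have hqq' : q ≠ σ q := (hσ.nofix q hq).symm
  have hpq' : p ≠ σ q := fun h => hqp' (by rw [h, hqq])
  have hp'q' : σ p ≠ σ q := fun h => hqp (by rw [← hqq, ← h, hpp])
  have h₁ := crossingIndicator_chord hqq hqp hqp' hpq'.symm hp'q'.symm
  have h₂ := crossingIndicator_chord (f := σ p) hqq hqp' (hpp.symm ▸ hqp) hp'q'.symm
    (hpp.symm ▸ hpq'.symm)
  rw [hpp] at h₂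
  simp only [Finset.sum_insert, Finset.mem_insert, Finset.mem_singleton, Finset.sum_singleton,
    hqp.symm, hpp', hpq', hqp', hqq', hp'q', or_self, not_false_eq_true, crossingIndicator_self,
    crossingIndicator_apply_right, crossingIndicator_apply_left hpp,
    crossingIndicator_apply_left hqq]
  linear_combination h₁ + h₂

lemma natCast_numCrossings_add_eq_of_eqOn {τ : ℕ → ℕ} (hσ : IsPairing n σ)
    (hτ : IsPairing n τ) {E : Finset ℕ} (hE : E ⊆ nodes n) (hσE : ∀ e ∈ E, σ e ∈ E)
    (hτE : ∀ e ∈ E, τ e ∈ E) (hστ : ∀ f ∈ nodes n, f ∉ E → σ f = τ f) :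
    ((numCrossings n σ + numCrossings n τ : ℕ) : ZMod 2)
      = ∑ a ∈ E, ∑ b ∈ E, (crossingIndicator σ a b + crossingIndicator τ a b) := by
  push_cast
  rw [numCrossings, numCrossings, natCast_numCrossingsOn, natCast_numCrossingsOn,
    ← Finset.sum_add_distrib]
  simp_rw [← Finset.sum_add_distrib]
  refine sum_sum_eq_sum_sum_of_subset _ hE (fun a ha b hb => ?_) (fun f hf => ?_)
  · rw [Finset.mem_sdiff] at ha hb
    simp only [crossingIndicator, hστ a ha.1 ha.2, hστ b hb.1 hb.2]
    exact CharTwo.add_self_eq_zero _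
  · rw [Finset.mem_sdiff] at hf
    calc ∑ e ∈ E, (crossingIndicator σ f e + crossingIndicator τ f e
            + (crossingIndicator σ e f + crossingIndicator τ e f))
        = ∑ e ∈ E, (crossingIndicator σ f e + crossingIndicator σ e f)
            + ∑ e ∈ E, (crossingIndicator τ f e + crossingIndicator τ e f) := by
          rw [← Finset.sum_add_distrib]
          exact Finset.sum_congr rfl fun e _ => by ring
      _ = 0 := by
          rw [sum_crossingIndicator_add_eq_sum_between hσ hE hσE hf.1 hf.2,
            sum_crossingIndicator_add_eq_sum_between hτ hE hτE hf.1 hf.2, hστ f hf.1 hf.2]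
          exact CharTwo.add_self_eq_zero _

end Crossings

lemma swap_chords_crossing_parity {x y u v : ℕ} (hxy : x < y) (hxu : x ≠ u) (hxv : x ≠ v)
    (hyu : y ≠ u) (hyv : y ≠ v) (huv : u ≠ v) :
    ((if x < y ∧ y < v then 1 else 0) + (if x < u ∧ u < v then 1 else 0)
        + ((if v < y ∧ y < x then 1 else 0) + (if v < u ∧ u < x then 1 else 0)))
      + ((if x < y ∧ y < u then 1 else 0) + (if x < v ∧ v < u then 1 else 0)
        + ((if u < y ∧ y < x then 1 else 0) + (if u < v ∧ v < x then 1 else 0)))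
      = (1 + (if x < u ∧ u < y then 1 else 0) + (if x < v ∧ v < y then 1 else 0) : ZMod 2) := by
  split_ifs <;> first | decide | (exfalso; omega)

section Swap

variable {n : ℕ} {ρ : ℕ → ℕ} {x y : ℕ}

lemma swap_apply_mem_nodes {a : ℕ} (hx : x ∈ nodes n) (hy : y ∈ nodes n) (ha : a ∈ nodes n) :
    Equiv.swap x y a ∈ nodes n := by
  rw [Equiv.swap_apply_def]
  split_ifs <;> assumption

lemma IsPairing.swap_conj (hρ : IsPairing n ρ) (hx : x ∈ nodes n) (hy : y ∈ nodes n) :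
    IsPairing n (fun a => Equiv.swap x y (ρ (Equiv.swap x y a))) where
  maps i hi := swap_apply_mem_nodes hx hy (hρ.maps _ (swap_apply_mem_nodes hx hy hi))
  invol i hi := by
    simp only [Equiv.swap_apply_self, hρ.invol _ (swap_apply_mem_nodes hx hy hi)]
  nofix i hi h := hρ.nofix _ (swap_apply_mem_nodes hx hy hi)
    ((Equiv.swap x y).injective (by rw [h, Equiv.swap_apply_self]))

lemma IsPairing.swap_conj_apply_of_notMem (hρ : IsPairing n ρ) {f : ℕ} (hf : f ∈ nodes n)
    (hfE : f ∉ ({x, y, ρ x, ρ y} : Finset ℕ)) :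
    Equiv.swap x y (ρ (Equiv.swap x y f)) = ρ f := by
  simp only [Finset.mem_insert, Finset.mem_singleton, not_or] at hfE
  obtain ⟨hfx, hfy, hfu, hfv⟩ := hfE
  have hρf : ∀ z, f ≠ ρ z → ρ f ≠ z := fun z hz h => hz (by rw [← h, hρ.invol f hf])
  rw [Equiv.swap_apply_of_ne_of_ne hfx hfy,
    Equiv.swap_apply_of_ne_of_ne (hρf x hfu) (hρf y hfv)]

theorem natCast_numCrossings_swap_conj_add (hρ : IsPairing n ρ)
    (hx : x ∈ nodes n) (hy : y ∈ nodes n) (hxy : x < y) (hne : ρ x ≠ y) :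
    ((numCrossings n (fun a => Equiv.swap x y (ρ (Equiv.swap x y a))) + numCrossings n ρ : ℕ)
        : ZMod 2)
      = 1 + (if x < ρ x ∧ ρ x < y then 1 else 0) + (if x < ρ y ∧ ρ y < y then 1 else 0) := by
  set ρ' : ℕ → ℕ := fun a => Equiv.swap x y (ρ (Equiv.swap x y a))
  have hρ' : IsPairing n ρ' := hρ.swap_conj hx hy
  have hxu : x ≠ ρ x := (hρ.nofix x hx).symm
  have hyv : y ≠ ρ y := (hρ.nofix y hy).symm
  have hxv : x ≠ ρ y := fun h => hne (by rw [h, hρ.invol y hy])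
  have huv : ρ x ≠ ρ y := fun h => hxy.ne (by rw [← hρ.invol x hx, h, hρ.invol y hy])
  have hρ'x : ρ' x = ρ y := by simp [ρ', Equiv.swap_apply_of_ne_of_ne hxv.symm hyv.symm]
  have hρ'y : ρ' y = ρ x := by simp [ρ', Equiv.swap_apply_of_ne_of_ne hxu.symm hne]
  set E : Finset ℕ := {x, y, ρ x, ρ y} with hE_def
  have hE' : E = {x, y, ρ' x, ρ' y} := by rw [hρ'x, hρ'y, Finset.pair_comm]
  have hE : E ⊆ nodes n := by
    simp only [E, Finset.insert_subset_iff, Finset.singleton_subset_iff]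
    exact ⟨hx, hy, hρ.maps x hx, hρ.maps y hy⟩
  have hρE : ∀ e ∈ E, ρ e ∈ E := by
    simp only [E, Finset.mem_insert, Finset.mem_singleton]
    rintro e (rfl | rfl | rfl | rfl) <;> simp [hρ.invol, hx, hy]
  have hρ'E : ∀ e ∈ E, ρ' e ∈ E := by
    simp only [hE', Finset.mem_insert, Finset.mem_singleton]
    rintro e (rfl | rfl | rfl | rfl) <;> simp [hρ'.invol, hx, hy]
  have hchords' := sum_sum_crossingIndicator_two_chords hρ' hx hy hxy.ne' (hρ'x ▸ hyv)
  have hchords := sum_sum_crossingIndicator_two_chords hρ hx hy hxy.ne' hne.symm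
  rw [← hE'] at hchords'
  rw [← hE_def] at hchords
  rw [natCast_numCrossings_add_eq_of_eqOn hρ' hρ hE hρ'E hρE
      fun f hf hfE => hρ.swap_conj_apply_of_notMem hf hfE,
    Finset.sum_congr rfl fun a _ => Finset.sum_add_distrib, Finset.sum_add_distrib,
    hchords', hchords, hρ'x, hρ'y]
  exact swap_chords_crossing_parity hxy hxu hxv hne.symm hyv huv

end Swap

theorem statement9_general (n : ℕ) (ρ : ℕ → ℕ) (hρ : IsPairing n ρ)
    (x y : ℕ) (hx : x ∈ nodes n) (hy : y ∈ nodes n) (hxy : x < y) (hne : ρ x ≠ y) :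
    letI ρ' : ℕ → ℕ := fun a => Equiv.swap x y (ρ (Equiv.swap x y a))
    (((x < ρ x ∧ ρ x < y) ∧ (x < ρ y ∧ ρ y < y)) →
        Odd (numCrossings n ρ' + numCrossings n ρ)) ∧
    ((((x < ρ x ∧ ρ x < y) ∧ ¬ (x < ρ y ∧ ρ y < y)) ∨
        (¬ (x < ρ x ∧ ρ x < y) ∧ (x < ρ y ∧ ρ y < y))) →
        Even (numCrossings n ρ' + numCrossings n ρ)) ∧
    ((¬ (x < ρ x ∧ ρ x < y) ∧ ¬ (x < ρ y ∧ ρ y < y)) →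
        Odd (numCrossings n ρ' + numCrossings n ρ)) := by
  have hparity := natCast_numCrossings_swap_conj_add hρ hx hy hxy hne
  refine ⟨fun ⟨hu, hv⟩ => ?_, fun h => ?_, fun ⟨hu, hv⟩ => ?_⟩
  · rw [← ZMod.natCast_eq_one_iff_odd, hparity, if_pos hu, if_pos hv]
    decide
  · rw [← ZMod.natCast_eq_zero_iff_even, hparity]
    rcases h with ⟨hu, hv⟩ | ⟨hu, hv⟩
    · rw [if_pos hu, if_neg hv]
      decide
    · rw [if_neg hu, if_pos hv]
      decide
  · rw [← ZMod.natCast_eq_one_iff_odd, hparity, if_neg hu, if_neg hv]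
    decide

/-- Lemma 2.1.28: parity change of the number of crossings under
swapping the locations of `x` and `y` when no two nodes strictly between `x` and `y`
are paired with each other. -/
theorem statement9 (n : ℕ) (ρ : ℕ → ℕ) (hρ : IsPairing n ρ)
    (x y : ℕ) (hx : x ∈ nodes n) (hy : y ∈ nodes n) (hxy : x < y) (hne : ρ x ≠ y)
    (hmid : ∀ a, x < a → a < y → ¬ (x < ρ a ∧ ρ a < y)) :
    letI ρ' : ℕ → ℕ := fun a => Equiv.swap x y (ρ (Equiv.swap x y a))
    (((x < ρ x ∧ ρ x < y) ∧ (x < ρ y ∧ ρ y < y)) →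
        Odd (numCrossings n ρ' + numCrossings n ρ)) ∧
    ((((x < ρ x ∧ ρ x < y) ∧ ¬ (x < ρ y ∧ ρ y < y)) ∨
        (¬ (x < ρ x ∧ ρ x < y) ∧ (x < ρ y ∧ ρ y < y))) →
        Even (numCrossings n ρ' + numCrossings n ρ)) ∧
    ((¬ (x < ρ x ∧ ρ x < y) ∧ ¬ (x < ρ y ∧ ρ y < y)) →
        Odd (numCrossings n ρ' + numCrossings n ρ)) :=
  statement9_general n ρ hρ x y hx hy hxy hne

end DD
end

section
/- Let π and ρ be pairings of N = {1,…,2n}, and suppose a < b < c < d are nodes with ρ(a) = c and ρ(b) = d. Let ρ₁ be the pairing agreeing with ρ outside {a,b,c,d} with ρ₁(a) = b and ρ₁(c) = d, and let ρ₂ be the pairing agreeing with ρ outside {a,b,c,d} with ρ₂(a) = d and ρ₂(b) = c. Writing C, C₁, C₂ for the numbers of components of π ∪ ρ, π ∪ ρ₁, π ∪ ρ₂ respectively, exactly one of the following holds: (1) C = C₁ + 1 and C = C₂ + 1; (2) C₁ = C + 1 and C₂ = C; (3) C₂ = C + 1 and C₁ = C. -/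
/-!
Remove the two `ρ`-edges of the crossing. What is left of `π ∪ ρ` (all `π`-edges, and the
`ρ`-edges away from `S = {a, b, c, d}`) is a union of alternating paths and cycles in which the
nodes of `S` are path ends: following the alternating walk from a node of `S` shows that it is
joined to exactly one other node of `S`, so `S` splits into two residual pairs. Each of `ρ`, `ρ₁`,
`ρ₂` adds back one of the three perfect matchings of `S`. The matching equal to the residual
pairing closes two separate cycles; each of the other two joins the two paths into one cycle.
So that pairing has one more component than the other two, which have equally many.
-/

namespace DD

open Relation

section Classes

open scoped Classical

variable {α : Type*} {E F : α → α → Prop}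

def mergeRel (E : α → α → Prop) (u v x y : α) : Prop :=
  E x y ∨ ((E x u ∨ E x v) ∧ (E y u ∨ E y v))

theorem equivalence_mergeRel (hE : Equivalence E) (u v : α) : Equivalence (mergeRel E u v) := by
  refine ⟨fun x => .inl (hE.refl x), ?_, ?_⟩
  · rintro x y (h | ⟨hx, hy⟩)
    exacts [.inl (hE.symm h), .inr ⟨hy, hx⟩]
  · have transfer : ∀ {x y}, E x y → (E y u ∨ E y v) → (E x u ∨ E x v) := fun hxy h =>
      h.imp (hE.trans hxy) (hE.trans hxy)
    rintro x y z (hxy | ⟨hx, hy⟩) (hyz | ⟨hy', hz⟩)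
    · exact .inl (hE.trans hxy hyz)
    · exact .inr ⟨transfer hxy hy', hz⟩
    · exact .inr ⟨hx, transfer (hE.symm hyz) hy⟩
    · exact .inr ⟨hx, hz⟩

variable [DecidableEq α] {s : Finset α}

noncomputable def numClasses (s : Finset α) (E : α → α → Prop) : ℕ :=
  (s.image fun x => s.filter (E x)).card

theorem numClasses_congr (h : ∀ x ∈ s, ∀ y ∈ s, E x y ↔ F x y) :
    numClasses s E = numClasses s F := by
  unfold numClasses
  congr 1
  exact Finset.image_congr fun x hx => Finset.filter_congr fun y hy => h x hx y hy

theorem numClasses_eq_filter_add_filter_not (hE : Equivalence E) (p : α → Prop)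
    (hp : ∀ x y, E x y → p x → p y) :
    numClasses s E = numClasses (s.filter p) E + numClasses (s.filter (¬ p ·)) E := by
  have hp' : ∀ x y, E x y → ¬ p x → ¬ p y := fun x y h hx hy => hx (hp y x (hE.symm h) hy)
  have restrict : ∀ (q : α → Prop) [DecidablePred q], (∀ x y, E x y → q x → q y) →
      ∀ x ∈ s.filter q, s.filter (E x) = (s.filter q).filter (E x) := by
    intro q _ hq x hx
    rw [Finset.filter_filter]
    exact Finset.filter_congr fun y _ =>
      ⟨fun h => ⟨hq x y h (Finset.mem_filter.1 hx).2, h⟩, And.right⟩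
  unfold numClasses
  rw [← Finset.image_congr (restrict p hp), ← Finset.image_congr (restrict _ hp'),
    ← Finset.card_union_of_disjoint, ← Finset.image_union, Finset.filter_union_filter_not_eq]
  simp only [Finset.disjoint_left, Finset.mem_image, Finset.mem_filter]
  rintro _ ⟨x, ⟨hxs, hx⟩, rfl⟩ ⟨y, ⟨-, hy⟩, hxy⟩
  have : x ∈ s.filter (E y) := hxy ▸ Finset.mem_filter.2 ⟨hxs, hE.refl x⟩
  exact hy (hp x y (hE.symm (Finset.mem_filter.1 this).2) hx)

theorem numClasses_filter_rel_eq_one (hE : Equivalence E) {u : α} (hu : u ∈ s) :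
    numClasses (s.filter (E u)) E = 1 := by
  unfold numClasses
  rw [Finset.card_eq_one]
  refine ⟨s.filter (E u), Finset.eq_singleton_iff_unique_mem.2 ⟨?_, ?_⟩⟩
  · refine Finset.mem_image.2 ⟨u, Finset.mem_filter.2 ⟨hu, hE.refl u⟩, ?_⟩
    rw [Finset.filter_filter]
    exact Finset.filter_congr fun y _ => and_self_iff
  · intro K hK
    obtain ⟨x, hx, rfl⟩ := Finset.mem_image.1 hK
    have hux := (Finset.mem_filter.1 hx).2
    rw [Finset.filter_filter]
    exact Finset.filter_congr fun y _ =>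
      ⟨And.left, fun h => ⟨h, hE.trans (hE.symm hux) h⟩⟩

theorem numClasses_mergeRel_add_one (hE : Equivalence E) {u v : α} (hu : u ∈ s) (hv : v ∈ s)
    (huv : ¬ E u v) : numClasses s (mergeRel E u v) + 1 = numClasses s E := by
  have hM := equivalence_mergeRel hE u v
  set rest := (s.filter (¬ E u ·)).filter (¬ E v ·)
  have invariant : ∀ w x y, E x y → E w x → E w y := fun _ _ _ hxy h => hE.trans h hxy
  have hE_split : numClasses s E = 2 + numClasses rest E := by
    rw [numClasses_eq_filter_add_filter_not hE _ (invariant u),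
      numClasses_filter_rel_eq_one hE hu,
      numClasses_eq_filter_add_filter_not (s := s.filter _) hE _ (invariant v),
      numClasses_filter_rel_eq_one hE (Finset.mem_filter.2 ⟨hv, huv⟩)]
    ring
  have hM_split : numClasses s (mergeRel E u v) = 1 + numClasses rest E := by
    rw [numClasses_eq_filter_add_filter_not hM _ fun x y h hx => hM.trans hx h,
      numClasses_filter_rel_eq_one hM hu]
    have hrest : s.filter (¬ mergeRel E u v u ·) = rest := by
      simp only [rest, Finset.filter_filter]
      refine Finset.filter_congr fun x _ => ?_
      have hxu : E x u ↔ E u x := ⟨hE.symm, hE.symm⟩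
      have hxv : E x v ↔ E v x := ⟨hE.symm, hE.symm⟩
      simp only [mergeRel, hE.refl u, true_or, true_and, not_or, hxu, hxv, and_self_left]
    rw [hrest]
    congr 1
    refine numClasses_congr fun x hx y _ => ?_
    simp only [rest, Finset.mem_filter] at hx
    have hxu : ¬ E x u := fun h => hx.1.2 (hE.symm h)
    have hxv : ¬ E x v := fun h => hx.2 (hE.symm h)
    simp only [mergeRel, hxu, hxv, or_self, false_and, or_false]
  omega

end Classes

section Closure

variable {α : Type*} {R X : α → α → Prop}

theorem equivalence_reflTransGen (hR : ∀ x y, R x y → R y x) : Equivalence (ReflTransGen R) :=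
  haveI : Std.Symm R := ⟨hR⟩
  ⟨fun _ => .refl, fun h => Std.Symm.symm _ _ h, .trans⟩

theorem reflTransGen_or_eq_of_le (hX : ∀ x y, X x y → ReflTransGen R x y) :
    ReflTransGen (fun x y => R x y ∨ X x y) = ReflTransGen R :=
  funext₂ fun x y => propext
    ⟨reflTransGen_closed (fun a b hab => hab.elim .single (hX a b)) x y,
      ReflTransGen.mono (fun _ _ => .inl) x y⟩

theorem reflTransGen_or_eq_mergeRel (hR : ∀ x y, R x y → R y x) (hX : ∀ x y, X x y → X y x)
    {u v : α} (huv : X u v)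
    (hXuv : ∀ x y, X x y → (ReflTransGen R x u ∨ ReflTransGen R x v) ∧
      (ReflTransGen R y u ∨ ReflTransGen R y v)) :
    ReflTransGen (fun x y => R x y ∨ X x y) = mergeRel (ReflTransGen R) u v := by
  have hM := equivalence_mergeRel (equivalence_reflTransGen hR) u v
  have hT := equivalence_reflTransGen (R := fun x y => R x y ∨ X x y) fun x y =>
    Or.imp (hR x y) (hX x y)
  have hET : ∀ {x y}, ReflTransGen R x y → ReflTransGen (fun x y => R x y ∨ X x y) x y :=
    ReflTransGen.mono (fun _ _ => .inl) _ _
  have toU : ∀ x, ReflTransGen R x u ∨ ReflTransGen R x v →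
      ReflTransGen (fun x y => R x y ∨ X x y) x u := by
    rintro x (h | h)
    exacts [hET h, hT.trans (hET h) (hT.symm (.single (.inr huv)))]
  funext x y
  refine propext ⟨fun h => ?_, ?_⟩
  · induction h with
    | refl => exact hM.refl x
    | tail _ hst ih =>
      exact hM.trans ih (hst.elim (fun h => .inl (.single h)) fun h => .inr (hXuv _ _ h))
  · rintro (h | ⟨hx, hy⟩)
    exacts [hET h, hT.trans (toU x hx) (hT.symm (toU y hy))]

end Closure

section Walk

variable {n : ℕ} {π ρ : ℕ → ℕ} {S : Set ℕ} {x : ℕ}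

def residualStep (n : ℕ) (π ρ : ℕ → ℕ) (S : Set ℕ) (u v : ℕ) : Prop :=
  u ∈ nodes n ∧ (v = π u ∨ (u ∉ S ∧ v = ρ u))

theorem residualStep_symm (hπ : IsPairing n π) (hρ : IsPairing n ρ) (hρS : ∀ y ∈ S, ρ y ∈ S)
    (u v : ℕ) : residualStep n π ρ S u v → residualStep n π ρ S v u := by
  rintro ⟨hu, rfl | ⟨huS, rfl⟩⟩
  · exact ⟨hπ.maps u hu, .inl (hπ.invol u hu).symm⟩
  · refine ⟨hρ.maps u hu, .inr ⟨fun h => huS ?_, (hρ.invol u hu).symm⟩⟩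
    simpa [hρ.invol u hu] using hρS _ h

def altStep (π ρ : ℕ → ℕ) (k : ℕ) : ℕ → ℕ := if Even k then π else ρ

def altWalk (π ρ : ℕ → ℕ) (x : ℕ) : ℕ → ℕ
  | 0 => x
  | k + 1 => altStep π ρ k (altWalk π ρ x k)

theorem isPairing_altStep (hπ : IsPairing n π) (hρ : IsPairing n ρ) (k : ℕ) :
    IsPairing n (altStep π ρ k) := by
  unfold altStep
  split_ifs
  exacts [hπ, hρ]

theorem altStep_of_even {k : ℕ} (hk : Even k) : altStep π ρ k = π := if_pos hk

theorem altStep_of_odd {k : ℕ} (hk : Odd k) : altStep π ρ k = ρ :=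
  if_neg (Nat.not_even_iff_odd.2 hk)

variable (hπ : IsPairing n π) (hρ : IsPairing n ρ) (hx : x ∈ nodes n)
include hπ hρ hx

theorem altWalk_mem : ∀ k, altWalk π ρ x k ∈ nodes n
  | 0 => hx
  | k + 1 => (isPairing_altStep hπ hρ k).maps _ (altWalk_mem k)

theorem altWalk_eq_altStep_succ (k : ℕ) :
    altWalk π ρ x k = altStep π ρ k (altWalk π ρ x (k + 1)) :=
  ((isPairing_altStep hπ hρ k).invol _ (altWalk_mem hπ hρ hx k)).symm

/-- A return to `x` at an odd time `t` would make the walk a palindrome on `[0, t]`, and its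
middle step would fix a node. -/
theorem altWalk_odd_ne {t : ℕ} (ht : Odd t) : altWalk π ρ x t ≠ x := by
  intro htx
  have palindrome : ∀ k ≤ t, altWalk π ρ x (t - k) = altWalk π ρ x k := by
    intro k hk
    induction k with
    | zero => exact htx
    | succ k ih =>
      have hpar : altStep π ρ (t - (k + 1)) = altStep π ρ k := by
        have : (t - (k + 1)) % 2 = 0 ↔ k % 2 = 0 := by rw [Nat.odd_iff] at ht; omega
        simp only [altStep, Nat.even_iff, this]
      rw [altWalk_eq_altStep_succ hπ hρ hx, show t - (k + 1) + 1 = t - k by omega,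
        ih (by omega), hpar]
      rfl
  obtain ⟨m, rfl⟩ := ht
  have h := palindrome m (by omega)
  rw [show 2 * m + 1 - m = m + 1 by omega] at h
  exact (isPairing_altStep hπ hρ m).nofix _ (altWalk_mem hπ hρ hx m) h

/-- `ρ ∘ π` permutes the nodes, so the walk is back at `x` at some even time `2m`; one step
earlier it is at `ρ x ∈ S`. -/
theorem exists_odd_altWalk_mem (hρS : ∀ y ∈ S, ρ y ∈ S) (hxS : x ∈ S) :
    ∃ k, Odd k ∧ altWalk π ρ x k ∈ S := by
  let f : nodes n → nodes n := fun z => ⟨ρ (π z), hρ.maps _ (hπ.maps _ z.2)⟩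
  have hf : Function.Injective f := by
    intro z z' h
    have h' := congrArg (fun w => π (ρ w.1)) h
    simp only [f, hρ.invol _ (hπ.maps _ z.2), hρ.invol _ (hπ.maps _ z'.2), hπ.invol _ z.2,
      hπ.invol _ z'.2] at h'
    exact Subtype.ext h'
  have hw : ∀ m, altWalk π ρ x (2 * m) = (f^[m] ⟨x, hx⟩).1 := by
    intro m
    induction m with
    | zero => rfl
    | succ m ih =>
      rw [Function.iterate_succ_apply']
      simp only [f, ← ih, show 2 * (m + 1) = 2 * m + 1 + 1 by ring, altWalk,
        altStep_of_odd (odd_two_mul_add_one m), altStep_of_even (even_two_mul m)]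
  obtain ⟨m, hm, hper⟩ := Function.mem_periodicPts.1 (hf.mem_periodicPts ⟨x, hx⟩)
  refine ⟨2 * m - 1, Nat.odd_iff.2 (by omega), ?_⟩
  rw [altWalk_eq_altStep_succ hπ hρ hx, show 2 * m - 1 + 1 = 2 * m by omega, hw, hper.eq,
    altStep_of_odd (Nat.odd_iff.2 (by omega))]
  exact hρS x hxS

theorem reflTransGen_altWalk {t : ℕ} (hmin : ∀ k < t, Odd k → altWalk π ρ x k ∉ S) :
    ∀ k ≤ t, ReflTransGen (residualStep n π ρ S) x (altWalk π ρ x k)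
  | 0, _ => .refl
  | k + 1, hk => by
    refine (reflTransGen_altWalk hmin k (by omega)).tail ⟨altWalk_mem hπ hρ hx k, ?_⟩
    rcases Nat.even_or_odd k with he | ho
    · exact .inl (by simp only [altWalk, altStep_of_even he])
    · exact .inr ⟨hmin k (by omega) ho, by simp only [altWalk, altStep_of_odd ho]⟩

theorem exists_altWalk_eq {t : ℕ} (ht : Odd t) (htS : altWalk π ρ x t ∈ S) (hxS : x ∈ S) {z : ℕ}
    (hz : ReflTransGen (residualStep n π ρ S) x z) : ∃ k ≤ t, altWalk π ρ x k = z := by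
  have ht2 := Nat.odd_iff.1 ht
  induction hz with
  | refl => exact ⟨0, Nat.zero_le _, rfl⟩
  | tail _ hst ih =>
    obtain ⟨k, hk, rfl⟩ := ih
    have back : ∀ j, j + 1 = k → altStep π ρ j (altWalk π ρ x k) = altWalk π ρ x j := by
      rintro j rfl
      exact (altWalk_eq_altStep_succ hπ hρ hx j).symm
    obtain ⟨-, rfl | ⟨hnS, rfl⟩⟩ := hst <;> rcases Nat.even_or_odd k with he | ho
    · have := Nat.even_iff.1 he
      exact ⟨k + 1, by omega, by simp only [altWalk, altStep_of_even he]⟩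
    · have := Nat.odd_iff.1 ho
      refine ⟨k - 1, by omega, ?_⟩
      rw [← back (k - 1) (by omega), altStep_of_even (Nat.even_iff.2 (by omega))]
    · have := Nat.even_iff.1 he
      have hk0 : k ≠ 0 := by
        rintro rfl
        exact hnS hxS
      refine ⟨k - 1, by omega, ?_⟩
      rw [← back (k - 1) (by omega), altStep_of_odd (Nat.odd_iff.2 (by omega))]
    · have hkt : k ≠ t := by
        rintro rfl
        exact hnS htS
      exact ⟨k + 1, by omega, by simp only [altWalk, altStep_of_odd ho]⟩

theorem eq_zero_or_eq_of_altWalk_mem (hρS : ∀ y ∈ S, ρ y ∈ S) {t k : ℕ}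
    (hmin : ∀ k < t, Odd k → altWalk π ρ x k ∉ S) (hk : k ≤ t) (hkS : altWalk π ρ x k ∈ S) :
    k = 0 ∨ k = t := by
  rcases Nat.even_or_odd k with he | ho
  · by_contra! h
    have := Nat.even_iff.1 he
    apply hmin (k - 1) (by omega) (Nat.odd_iff.2 (by omega))
    rw [altWalk_eq_altStep_succ hπ hρ hx, show k - 1 + 1 = k by omega,
      altStep_of_odd (Nat.odd_iff.2 (by omega))]
    exact hρS _ hkS
  · exact .inr (le_antisymm hk (not_lt.1 fun h => hmin k h ho hkS))

/-- The partner of `x` is the first node of `S` that the walk reaches at an odd time, i.e. by a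
`π`-step: there the residual walk cannot go on. -/
theorem existsUnique_partner (hρS : ∀ y ∈ S, ρ y ∈ S) (hxS : x ∈ S) :
    ∃! y, y ∈ S ∧ y ≠ x ∧ ReflTransGen (residualStep n π ρ S) x y := by
  classical
  have hex := exists_odd_altWalk_mem hπ hρ hx hρS hxS
  obtain ⟨ht, htS⟩ := Nat.find_spec hex
  have hmin : ∀ k < Nat.find hex, Odd k → altWalk π ρ x k ∉ S := fun k hk hko hkS =>
    Nat.find_min hex hk ⟨hko, hkS⟩
  refine ⟨altWalk π ρ x (Nat.find hex), ⟨htS, altWalk_odd_ne hπ hρ hx ht,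
    reflTransGen_altWalk hπ hρ hx hmin _ le_rfl⟩, ?_⟩
  rintro z ⟨hzS, hzx, hz⟩
  obtain ⟨k, hk, rfl⟩ := exists_altWalk_eq hπ hρ hx ht htS hxS hz
  rcases eq_zero_or_eq_of_altWalk_mem hπ hρ hx hρS hmin hk hzS with rfl | rfl
  exacts [absurd rfl hzx, rfl]

end Walk

theorem rel_trichotomy_of_existsUnique {α : Type*} {S : Set α} {E : α → α → Prop}
    (hE : Equivalence E) {a b c d : α} (hS : S = {a, b, c, d})
    (hnd : a ≠ b ∧ a ≠ c ∧ a ≠ d ∧ b ≠ c ∧ b ≠ d ∧ c ≠ d)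
    (h : ∀ x ∈ S, ∃! y, y ∈ S ∧ y ≠ x ∧ E x y) :
    (E a b ∧ E c d ∧ ¬ E a c ∧ ¬ E a d) ∨ (E a c ∧ E b d ∧ ¬ E a b ∧ ¬ E a d) ∨
      (E a d ∧ E b c ∧ ¬ E a b ∧ ¬ E a c) := by
  subst hS
  simp only [Set.mem_insert_iff, Set.mem_singleton_iff] at h
  obtain ⟨y, ⟨hyS, hya, hay⟩, hy⟩ := h a (by simp)
  obtain ⟨z, ⟨hzS, hzb, hbz⟩, hz⟩ := h b (by simp)
  obtain ⟨w, ⟨hwS, hwc, hcw⟩, hw⟩ := h c (by simp)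
  have hs : ∀ {x y}, E x y → E y x := hE.symm
  have ht : ∀ {x y z}, E x y → E y z → E x z := hE.trans
  grind

section Rewire

variable {n : ℕ} {π ρ : ℕ → ℕ} {S : Set ℕ} {p p' q q' : ℕ}

def rewire (ρ : ℕ → ℕ) (p p' q q' i : ℕ) : ℕ :=
  if i = p then p' else if i = p' then p else if i = q then q' else if i = q' then q else ρ i

theorem rewire_eq_self (hp : ρ p = p') (hp' : ρ p' = p) (hq : ρ q = q') (hq' : ρ q' = q) :
    rewire ρ p p' q q' = ρ := by
  funext i
  unfold rewire
  split_ifs <;> simp_all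

def pairEdges (p p' q q' u v : ℕ) : Prop :=
  (u = p ∧ v = p') ∨ (u = p' ∧ v = p) ∨ (u = q ∧ v = q') ∨ (u = q' ∧ v = q)

theorem compRel_rewire (hS : S = {p, p', q, q'}) (hSn : S ⊆ nodes n)
    (hnd : p ≠ p' ∧ p ≠ q ∧ p ≠ q' ∧ p' ≠ q ∧ p' ≠ q' ∧ q ≠ q') :
    compRel n π (rewire ρ p p' q q') =
      ReflTransGen fun u v => residualStep n π ρ S u v ∨ pairEdges p p' q q' u v := by
  subst hS
  simp only [Set.insert_subset_iff, Set.singleton_subset_iff, Finset.mem_coe] at hSn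
  refine congrArg ReflTransGen (funext₂ fun u v => propext ?_)
  simp only [residualStep, pairEdges, rewire, Set.mem_insert_iff, Set.mem_singleton_iff]
  grind

theorem numComponents_eq_numClasses (n : ℕ) (π ρ : ℕ → ℕ) :
    numComponents n π ρ = numClasses (nodes n) (compRel n π ρ) := rfl

open scoped Classical in
/-- The two new edges either lie inside residual classes, or both join the class of `p` to that
of `p'`. -/
theorem numComponents_rewire (hπ : IsPairing n π) (hρ : IsPairing n ρ) (hS : S = {p, p', q, q'})
    (hSn : S ⊆ nodes n) (hρS : ∀ y ∈ S, ρ y ∈ S)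
    (hnd : p ≠ p' ∧ p ≠ q ∧ p ≠ q' ∧ p' ≠ q ∧ p' ≠ q' ∧ q ≠ q') :
    numComponents n π (rewire ρ p p' q q') +
        (if ReflTransGen (residualStep n π ρ S) p p' then 0 else 1) =
      numClasses (nodes n) (ReflTransGen (residualStep n π ρ S)) := by
  set E := ReflTransGen (residualStep n π ρ S)
  have hR := residualStep_symm hπ hρ hρS
  have hE : Equivalence E := equivalence_reflTransGen hR
  have hX : ∀ u v, pairEdges p p' q q' u v → pairEdges p p' q q' v u := by
    unfold pairEdges
    tauto
  have hpS : p ∈ S ∧ p' ∈ S := by simp [hS]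
  rw [numComponents_eq_numClasses, compRel_rewire hS hSn hnd]
  rcases rel_trichotomy_of_existsUnique hE hS hnd fun x hx =>
    existsUnique_partner hπ hρ (hSn hx) hρS hx with ⟨h₁, h₂, -, -⟩ | hcross
  · rw [if_pos h₁, reflTransGen_or_eq_of_le, add_zero]
    rintro u v (⟨rfl, rfl⟩ | ⟨rfl, rfl⟩ | ⟨rfl, rfl⟩ | ⟨rfl, rfl⟩)
    exacts [h₁, hE.symm h₁, h₂, hE.symm h₂]
  · obtain ⟨hpp', hc⟩ : ¬ E p p' ∧ ∀ u, u = p ∨ u = p' ∨ u = q ∨ u = q' → E u p ∨ E u p' := by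
      rcases hcross with ⟨h₁, h₂, h₃, -⟩ | ⟨h₁, h₂, h₃, -⟩ <;>
        refine ⟨h₃, ?_⟩ <;> rintro u (rfl | rfl | rfl | rfl)
      exacts [.inl (hE.refl _), .inr (hE.refl _), .inl (hE.symm h₁), .inr (hE.symm h₂),
        .inl (hE.refl _), .inr (hE.refl _), .inr (hE.symm h₂), .inl (hE.symm h₁)]
    rw [if_neg hpp', reflTransGen_or_eq_mergeRel hR hX (.inl ⟨rfl, rfl⟩)]
    · exact numClasses_mergeRel_add_one hE (hSn hpS.1) (hSn hpS.2) hpp'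
    · rintro u v (⟨rfl, rfl⟩ | ⟨rfl, rfl⟩ | ⟨rfl, rfl⟩ | ⟨rfl, rfl⟩) <;>
        exact ⟨hc _ (by simp), hc _ (by simp)⟩

end Rewire

/-- Lemma 2.5.3: uncrossing a crossing `(a,c)`, `(b,d)` of `ρ` in the
two possible ways changes the number of components of `π ∪ ρ` in exactly one of three
mutually exclusive manners. -/
theorem statement10 (n : ℕ) (π ρ : ℕ → ℕ)
    (hπ : IsPairing n π) (hρ : IsPairing n ρ)
    (a b c d : ℕ) (ha : a ∈ nodes n) (hb : b ∈ nodes n)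
    (hc : c ∈ nodes n) (hd : d ∈ nodes n)
    (hab : a < b) (hbc : b < c) (hcd : c < d)
    (hρa : ρ a = c) (hρb : ρ b = d) :
    letI ρ₁ : ℕ → ℕ := fun i =>
      if i = a then b else if i = b then a
      else if i = c then d else if i = d then c else ρ i
    letI ρ₂ : ℕ → ℕ := fun i =>
      if i = a then d else if i = d then a
      else if i = b then c else if i = c then b else ρ i
    (numComponents n π ρ = numComponents n π ρ₁ + 1 ∧
        numComponents n π ρ = numComponents n π ρ₂ + 1) ∨
    (numComponents n π ρ₁ = numComponents n π ρ + 1 ∧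
        numComponents n π ρ₂ = numComponents n π ρ) ∨
    (numComponents n π ρ₂ = numComponents n π ρ + 1 ∧
        numComponents n π ρ₁ = numComponents n π ρ) := by
  have hρc : ρ c = a := hρa ▸ hρ.invol a ha
  have hρd : ρ d = b := hρb ▸ hρ.invol b hb
  set S : Set ℕ := {a, b, c, d} with hS
  have hSn : S ⊆ nodes n := by simp [S, Set.insert_subset_iff, ha, hb, hc, hd]
  have hρS : ∀ y ∈ S, ρ y ∈ S := by
    rintro y (rfl | rfl | rfl | rfl) <;> simp [S, hρa, hρb, hρc, hρd]
  have count := fun p p' q q' (hS : S = {p, p', q, q'})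
      (hnd : p ≠ p' ∧ p ≠ q ∧ p ≠ q' ∧ p' ≠ q ∧ p' ≠ q' ∧ q ≠ q') =>
    numComponents_rewire hπ hρ hS hSn hρS hnd
  have hC := count a c b d (by rw [hS, Set.insert_comm b c]) (by omega)
  rw [rewire_eq_self hρa hρc hρb hρd] at hC
  have hC₁ := count a b c d hS (by omega)
  have hC₂ := count a d b c (by rw [hS, Set.pair_comm c d, Set.insert_comm b d]) (by omega)
  unfold rewire at hC₁ hC₂
  rcases rel_trichotomy_of_existsUnique (equivalence_reflTransGen (residualStep_symm hπ hρ hρS))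
    hS (by omega) fun x hx => existsUnique_partner hπ hρ (hSn hx) hρS hx with
    ⟨h₁, -, h₂, h₃⟩ | ⟨h₁, -, h₂, h₃⟩ | ⟨h₁, -, h₂, h₃⟩ <;>
    simp only [h₁, h₂, h₃, if_true, if_false] at hC hC₁ hC₂ <;> omega

end DD
end

section
/- Let π and ρ be planar odd-even pairings of N = {1,…,2n}. Then (−1)^{(number of components of π ∪ ρ)} = (−1)^n · sign_OE(π) · sign_OE(ρ). -/
/-!
Write `π (2i+1) = 2 P(i) + 2` and `ρ (2i+1) = 2 R(i) + 2` for permutations `P`, `R` of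
`Fin n`; then `sign_OE π = sign P` and `sign_OE ρ = sign R`. Following `π` and then `ρ` takes
the odd node `2i+1` to `2σ(i)+1` with `σ = R⁻¹ P`, and every even node is joined by `π` to an
odd one, so the components of `π ∪ ρ` are in bijection with the cycles of `σ`. The claim
becomes `(-1)^#cycles(σ) = sign σ · (-1)^n`, which holds for every permutation of an
`n`-element set since a cycle of length `ℓ` has sign `(-1)^(ℓ-1)`.
-/

namespace Finset

theorem card_image_le_card_image_of_imp {α β γ : Type*} [DecidableEq β] [DecidableEq γ]
    {s : Finset α} {f : α → β} {g : α → γ}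
    (h : ∀ a ∈ s, ∀ b ∈ s, f a = f b → g a = g b) :
    #(s.image g) ≤ #(s.image f) := by
  let p : α → β × γ := fun a => (f a, g a)
  have hfst : Set.InjOn Prod.fst (s.image p : Set (β × γ)) := by
    rw [coe_image]
    rintro _ ⟨a, ha, rfl⟩ _ ⟨b, hb, rfl⟩ hab
    exact Prod.ext hab (h a ha b hb hab)
  calc #(s.image g) = #((s.image p).image Prod.snd) := by rw [image_image]; rfl
    _ ≤ #(s.image p) := card_image_le
    _ = #((s.image p).image Prod.fst) := (card_image_of_injOn hfst).symm
    _ = #(s.image f) := by rw [image_image]; rfl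

theorem card_image_eq_card_image_of_iff {α β γ : Type*} [DecidableEq β] [DecidableEq γ]
    {s : Finset α} {f : α → β} {g : α → γ}
    (h : ∀ a ∈ s, ∀ b ∈ s, f a = f b ↔ g a = g b) :
    #(s.image f) = #(s.image g) :=
  le_antisymm (card_image_le_card_image_of_imp fun a ha b hb => (h a ha b hb).2)
    (card_image_le_card_image_of_imp fun a ha b hb => (h a ha b hb).1)

end Finset

section

open Finset

namespace Equiv.Perm

variable {α : Type*} [Fintype α] [DecidableEq α]

theorem sign_eq_neg_one_pow_card_inversions {m : ℕ} (σ : Perm (Fin m)) :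
    (sign σ : ℤ) = (-1) ^ #{p : Fin m × Fin m | p.1 < p.2 ∧ σ p.2 < σ p.1} := by
  rw [sign_eq_prod_prod_Ioi, card_filter, ← univ_product_univ, sum_product]
  push_cast
  simp only [← prod_pow_eq_pow_sum]
  refine prod_congr rfl fun i _ => ?_
  rw [← filter_lt_eq_Ioi, prod_filter]
  refine prod_congr rfl fun j _ => ?_
  by_cases hij : i < j
  · rcases lt_or_gt_of_ne (σ.injective.ne hij.ne) with h | h <;> simp [hij, h, h.not_gt]
  · simp [hij]

theorem image_cycleOf_support (σ : Perm α) :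
    σ.support.image σ.cycleOf = σ.cycleFactorsFinset := by
  ext c
  simp only [mem_image]
  constructor
  · rintro ⟨a, ha, rfl⟩
    exact cycleOf_mem_cycleFactorsFinset_iff.2 ha
  · intro hc
    obtain ⟨a, ha⟩ := (mem_cycleFactorsFinset_iff.1 hc).1.nonempty_support
    exact ⟨a, mem_cycleFactorsFinset_support_le hc ha, (cycle_is_cycleOf ha hc).symm⟩

theorem card_image_of_sameCycle_iff {β : Type*} [DecidableEq β] (σ : Perm α) (f : α → β)
    (hf : ∀ a b, f a = f b ↔ σ.SameCycle a b) :
    #(univ.image f) = #σ.cycleFactorsFinset + (Fintype.card α - #σ.support) := by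
  have hfix : ∀ a ∉ σ.support, ∀ b, f a = f b → a = b := fun a ha b hab =>
    ((hf a b).1 hab).eq_of_left (notMem_support.1 ha)
  have hsupp : #(σ.support.image f) = #σ.cycleFactorsFinset := by
    rw [← image_cycleOf_support]
    apply card_image_eq_card_image_of_iff
    intro a ha b hb
    rw [hf]
    refine ⟨SameCycle.cycleOf_eq, fun h => ?_⟩
    have hb' : b ∈ (σ.cycleOf a).support :=
      h ▸ mem_support_cycleOf_iff.2 ⟨SameCycle.refl _ _, hb⟩
    exact (mem_support_cycleOf_iff.1 hb').1
  have hcompl : #(σ.supportᶜ.image f) = Fintype.card α - #σ.support := by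
    rw [card_image_of_injOn fun a ha b _ hab => hfix a (mem_compl.1 ha) b hab, card_compl]
  have hdisj : _root_.Disjoint (σ.support.image f) (σ.supportᶜ.image f) := by
    simp only [disjoint_left, mem_image, mem_compl, not_exists, not_and]
    rintro _ ⟨a, ha, rfl⟩ b hb hba
    exact hb (hfix b hb a hba ▸ ha)
  rw [← union_compl σ.support, image_union, card_union_of_disjoint hdisj, hsupp, hcompl]

theorem neg_one_pow_card_image_of_sameCycle_iff {β : Type*} [DecidableEq β] (σ : Perm α)
    (f : α → β) (hf : ∀ a b, f a = f b ↔ σ.SameCycle a b) :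
    (-1 : ℤ) ^ #(univ.image f) = sign σ * (-1) ^ Fintype.card α := by
  have hle : #σ.support ≤ Fintype.card α := card_le_univ _
  rw [card_image_of_sameCycle_iff σ f hf, sign_of_cycleType, sum_cycleType, cycleType_def,
    Multiset.card_map, ← card_def]
  push_cast
  rw [← pow_add, show #σ.support + #σ.cycleFactorsFinset + Fintype.card α
      = #σ.cycleFactorsFinset + (Fintype.card α - #σ.support) + 2 * #σ.support by omega,
    pow_add _ _ (2 * _), pow_mul, neg_one_sq, one_pow, mul_one]

end Equiv.Perm

end

namespace DD

open Equiv Equiv.Perm Finset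

variable {n : ℕ} {π ρ : ℕ → ℕ}

lemma mem_nodes {m : ℕ} : m ∈ nodes n ↔ 1 ≤ m ∧ m ≤ 2 * n := mem_Icc

lemma odd_mem_nodes (i : Fin n) : 2 * (i : ℕ) + 1 ∈ nodes n := by
  have := i.isLt; rw [mem_nodes]; omega

lemma even_mem_nodes (i : Fin n) : 2 * (i : ℕ) + 2 ∈ nodes n := by
  have := i.isLt; rw [mem_nodes]; omega

section OddEven

lemma apply_odd_bounds (hπ : IsPairing n π) (hoe : IsOE n π) (i : Fin n) :
    2 ≤ π (2 * i + 1) ∧ π (2 * i + 1) ≤ 2 * n ∧ π (2 * i + 1) % 2 = 0 := by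
  have := mem_nodes.1 (hπ.maps _ (odd_mem_nodes i)); have := hoe _ (odd_mem_nodes i); omega

lemma apply_even_bounds (hπ : IsPairing n π) (hoe : IsOE n π) (j : Fin n) :
    π (2 * j + 2) < 2 * n ∧ π (2 * j + 2) % 2 = 1 := by
  have := mem_nodes.1 (hπ.maps _ (even_mem_nodes j)); have := hoe _ (even_mem_nodes j); omega

variable (hπ : IsPairing n π) (hoe : IsOE n π)

def oddEvenPerm : Perm (Fin n) where
  toFun i := ⟨(π (2 * i + 1) - 2) / 2, by have := apply_odd_bounds hπ hoe i; omega⟩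
  invFun j := ⟨π (2 * j + 2) / 2, by have := apply_even_bounds hπ hoe j; omega⟩
  left_inv i := by
    have := apply_odd_bounds hπ hoe i
    have h : 2 * ((π (2 * i + 1) - 2) / 2) + 2 = π (2 * i + 1) := by omega
    ext; simp only [h, hπ.invol _ (odd_mem_nodes i)]; omega
  right_inv j := by
    have := apply_even_bounds hπ hoe j
    have h : 2 * (π (2 * j + 2) / 2) + 1 = π (2 * j + 2) := by omega
    ext; simp only [h, hπ.invol _ (even_mem_nodes j)]; omega

lemma apply_odd_eq_oddEvenPerm (i : Fin n) :
    π (2 * i + 1) = 2 * (oddEvenPerm hπ hoe i : ℕ) + 2 := by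
  have := apply_odd_bounds hπ hoe i
  show _ = 2 * ((π (2 * i + 1) - 2) / 2) + 2
  omega

lemma apply_even_eq_oddEvenPerm_symm (j : Fin n) :
    π (2 * j + 2) = 2 * ((oddEvenPerm hπ hoe).symm j : ℕ) + 1 := by
  have := apply_even_bounds hπ hoe j
  show _ = 2 * (π (2 * j + 2) / 2) + 1
  omega

lemma signOE_eq_sign :
    signOE n π = sign (oddEvenPerm hπ hoe) := by
  rw [sign_eq_neg_one_pow_card_inversions, signOE]
  congr 1
  symm
  refine card_bij (fun q _ => (2 * (q.1 : ℕ) + 1, 2 * (q.2 : ℕ) + 1)) ?_ ?_ ?_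
  · intro q hq
    simp only [mem_filter, mem_product, mem_univ, true_and, Fin.lt_def] at hq ⊢
    rw [apply_odd_eq_oddEvenPerm hπ hoe, apply_odd_eq_oddEvenPerm hπ hoe]
    exact ⟨⟨odd_mem_nodes _, odd_mem_nodes _⟩, by omega, by omega, by omega, by omega⟩
  · intro q _ q' _ h
    simp only [Prod.mk.injEq] at h
    exact Prod.ext (Fin.ext (by omega)) (Fin.ext (by omega))
  · intro p hp
    simp only [mem_filter, mem_product, mem_nodes] at hp
    obtain ⟨⟨hp1, hp2⟩, ho1, ho2, hlt, hinv⟩ := hp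
    obtain ⟨i, hi⟩ : ∃ i : Fin n, 2 * (i : ℕ) + 1 = p.1 :=
      ⟨⟨p.1 / 2, by omega⟩, by dsimp only; omega⟩
    obtain ⟨j, hj⟩ : ∃ j : Fin n, 2 * (j : ℕ) + 1 = p.2 :=
      ⟨⟨p.2 / 2, by omega⟩, by dsimp only; omega⟩
    rw [← hi, ← hj, apply_odd_eq_oddEvenPerm hπ hoe, apply_odd_eq_oddEvenPerm hπ hoe] at hinv
    refine ⟨(i, j), ?_, Prod.ext hi hj⟩
    simp only [mem_filter, mem_univ, true_and, Fin.lt_def]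
    omega

end OddEven

section Components

lemma compRel_symm (hπ : IsPairing n π) (hρ : IsPairing n ρ) {a b : ℕ}
    (h : compRel n π ρ a b) : compRel n π ρ b a := by
  induction h with
  | refl => exact .refl
  | tail _ hstep ih =>
    obtain ⟨hb, rfl | rfl⟩ := hstep
    · exact .head ⟨hπ.maps _ hb, .inl (hπ.invol _ hb).symm⟩ ih
    · exact .head ⟨hρ.maps _ hb, .inr (hρ.invol _ hb).symm⟩ ih

open scoped Classical in
noncomputable def component (n : ℕ) (π ρ : ℕ → ℕ) (a : ℕ) : Finset ℕ :=
  (nodes n).filter (compRel n π ρ a)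

lemma component_eq_iff (hπ : IsPairing n π) (hρ : IsPairing n ρ) {a b : ℕ}
    (hb : b ∈ nodes n) :
    component n π ρ a = component n π ρ b ↔ compRel n π ρ a b := by
  classical
  refine ⟨fun h => ?_, fun h => ?_⟩
  · have hbb : b ∈ component n π ρ b := mem_filter.2 ⟨hb, .refl⟩
    exact (mem_filter.1 (h ▸ hbb)).2
  · ext x
    simp only [component, mem_filter]
    exact and_congr_right fun _ => ⟨(compRel_symm hπ hρ h).trans, h.trans⟩

lemma numComponents_eq_card_image_odd (hπ : IsPairing n π) (hπoe : IsOE n π)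
    (hρ : IsPairing n ρ) :
    numComponents n π ρ = #(univ.image fun i : Fin n => component n π ρ (2 * i + 1)) := by
  suffices (nodes n).image (component n π ρ) =
      univ.image fun i : Fin n => component n π ρ (2 * i + 1) by rw [← this]; rfl
  ext C
  simp only [mem_image, mem_univ, true_and]
  refine ⟨?_, fun ⟨i, hi⟩ => ⟨_, odd_mem_nodes i, hi⟩⟩
  rintro ⟨a, ha, rfl⟩
  have := mem_nodes.1 ha
  obtain ⟨k, rfl | rfl⟩ := Nat.even_or_odd' a
  · refine ⟨(oddEvenPerm hπ hπoe).symm ⟨k - 1, by omega⟩,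
      (component_eq_iff hπ hρ ha).2 (.single ⟨odd_mem_nodes _, .inl ?_⟩)⟩
    rw [apply_odd_eq_oddEvenPerm hπ hπoe, apply_symm_apply, Fin.val_mk]
    omega
  · exact ⟨⟨k, by omega⟩, rfl⟩

variable (hπ : IsPairing n π) (hπoe : IsOE n π) (hρ : IsPairing n ρ) (hρoe : IsOE n ρ)

def returnPerm : Perm (Fin n) := (oddEvenPerm hπ hπoe).trans (oddEvenPerm hρ hρoe).symm

lemma compRel_returnPerm (i : Fin n) :
    compRel n π ρ (2 * i + 1) (2 * (returnPerm hπ hπoe hρ hρoe i : ℕ) + 1) :=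
  .tail (.single ⟨odd_mem_nodes i, .inl (apply_odd_eq_oddEvenPerm hπ hπoe i).symm⟩)
    ⟨even_mem_nodes _, .inr (apply_even_eq_oddEvenPerm_symm hρ hρoe _).symm⟩

lemma compRel_of_sameCycle {i j : Fin n} (h : (returnPerm hπ hπoe hρ hρoe).SameCycle i j) :
    compRel n π ρ (2 * i + 1) (2 * j + 1) := by
  obtain ⟨k, rfl⟩ := h.exists_nat_pow_eq
  clear h
  induction k with
  | zero => exact .refl
  | succ k ih =>
    rw [pow_succ', mul_apply]
    exact ih.trans (compRel_returnPerm hπ hπoe hρ hρoe _)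

lemma exists_sameCycle_of_compRel {i : Fin n} {b : ℕ} (h : compRel n π ρ (2 * i + 1) b) :
    ∃ j, (returnPerm hπ hπoe hρ hρoe).SameCycle i j ∧
      (b = 2 * j + 1 ∨ b = 2 * (oddEvenPerm hπ hπoe j : ℕ) + 2) := by
  induction h with
  | refl => exact ⟨i, .refl _ _, .inl rfl⟩
  | tail _ hstep ih =>
    obtain ⟨j, hij, rfl | rfl⟩ := ih <;> obtain ⟨-, rfl | rfl⟩ := hstep
    · exact ⟨j, hij, .inr (apply_odd_eq_oddEvenPerm hπ hπoe j)⟩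
    · refine ⟨(returnPerm hπ hπoe hρ hρoe).symm j, sameCycle_symm_apply_right.2 hij,
        .inr ?_⟩
      simp [returnPerm, apply_odd_eq_oddEvenPerm hρ hρoe j]
    · refine ⟨j, hij, .inl ?_⟩
      rw [apply_even_eq_oddEvenPerm_symm hπ hπoe, symm_apply_apply]
    · exact ⟨returnPerm hπ hπoe hρ hρoe j, sameCycle_apply_right.2 hij,
        .inl (apply_even_eq_oddEvenPerm_symm hρ hρoe _)⟩

lemma component_odd_eq_iff (i j : Fin n) :
    component n π ρ (2 * i + 1) = component n π ρ (2 * j + 1) ↔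
      (returnPerm hπ hπoe hρ hρoe).SameCycle i j := by
  rw [component_eq_iff hπ hρ (odd_mem_nodes j)]
  refine ⟨fun h => ?_, compRel_of_sameCycle hπ hπoe hρ hρoe⟩
  obtain ⟨k, hik, hk | hk⟩ := exists_sameCycle_of_compRel hπ hπoe hρ hρoe h
  · rwa [Fin.ext (by omega : (j : ℕ) = k)]
  · omega

end Components

theorem statement11_general (n : ℕ) (π ρ : ℕ → ℕ)
    (hπ : IsPairing n π) (hρ : IsPairing n ρ)
    (hπoe : IsOE n π) (hρoe : IsOE n ρ) :
    (-1 : ℤ) ^ (numComponents n π ρ)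
      = (-1 : ℤ) ^ n * signOE n π * signOE n ρ := by
  rw [numComponents_eq_card_image_odd hπ hπoe hρ,
    neg_one_pow_card_image_of_sameCycle_iff _ _ (component_odd_eq_iff hπ hπoe hρ hρoe),
    returnPerm, sign_trans, sign_symm, signOE_eq_sign hπ hπoe, signOE_eq_sign hρ hρoe,
    Fintype.card_fin]
  push_cast
  ring

/-- for planar odd-even pairings `π` and `ρ`,
`(−1)^{#components of π ∪ ρ} = (−1)^n · sign_OE(π) · sign_OE(ρ)`. -/
theorem statement11 (n : ℕ) (π ρ : ℕ → ℕ)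
    (hπ : IsPairing n π) (hρ : IsPairing n ρ)
    (hπoe : IsOE n π) (hρoe : IsOE n ρ)
    (hπpl : IsPlanar n π) (hρpl : IsPlanar n ρ) :
    (-1 : ℤ) ^ (numComponents n π ρ)
      = (-1 : ℤ) ^ n * signOE n π * signOE n ρ :=
  statement11_general n π ρ hπ hρ hπoe hρoe

end DD
end

section
/- Let N = {1,…,2n} carry a coloring with exactly n black and n white nodes, and let T be the set of nodes that are either odd and white or even and black. Let π be an odd-even pairing and ρ a black-white pairing of N, and let S₁, S₂ ⊆ N be balanced subsets with ρ(S_i) = S_i and π(S_i △ T) = S_i △ T for i = 1, 2. For i = 1, 2, let ρ_i be a black-white pairing with ρ_i(S_i) = S_i whose restrictions to S_i and to N \ S_i have no crossings. Then the numbers of crossings of ρ₁ and ρ₂ have the same parity. -/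
namespace DD

/-!
Fix a pairing `ρ` and a `ρ`-invariant set `S`. The crossings of `ρ` between a chord inside `S`
and a chord outside `S` are counted, mod 2, by the pairs `a ∈ S`, `b ∉ S` with `a < b`: the pairs
where both ends of the chord of `b` lie to the right of `a`, and then those where both ends of the
chord of `a` lie under the chord of `b`, cancel two by two, and what remains is one pair per
crossing. Counting those pairs directly gives
`cr(ρ) ≡ cr_S(ρ) + cr_{N∖S}(ρ) + #{odd nodes of S} + |S|/2`, and for balanced `S` the last two
terms add up to `|S ∩ T|` mod 2. Finally `S₁ ∆ S₂` is invariant under both `π` and `ρ`, so it has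
as many odd nodes as even ones and as many black nodes as white ones, which makes
`|(S₁ ∆ S₂) ∩ T|` even.
-/

open Finset
open scoped symmDiff

section Parity

variable {α : Type*}

theorem even_card_of_involution_s14 {s : Finset α} (f : α → α) (hf : ∀ a ∈ s, f a ∈ s)
    (hinv : ∀ a ∈ s, f (f a) = a) (hne : ∀ a ∈ s, f a ≠ a) : Even #s := by
  rw [← ZMod.natCast_eq_zero_iff_even, card_eq_sum_ones, Nat.cast_sum, Nat.cast_one]
  exact sum_involution (fun a _ => f a) (fun _ _ => rfl) (fun a ha _ => hne a ha) hf hinv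

theorem card_modEq_of_involution_sdiff {s t : Finset α} [DecidableEq α] (hts : t ⊆ s)
    (f : α → α) (hf : ∀ a ∈ s \ t, f a ∈ s \ t) (hinv : ∀ a ∈ s \ t, f (f a) = a)
    (hne : ∀ a ∈ s \ t, f a ≠ a) : #s ≡ #t [MOD 2] := by
  obtain ⟨k, hk⟩ := even_card_of_involution_s14 f hf hinv hne
  have := card_sdiff_add_card_eq_card hts
  unfold Nat.ModEq
  omega

theorem card_filter_eq_card_filter_not_of_involution (s : Finset α) (p : α → Prop)
    [DecidablePred p] (f : α → α) (hf : ∀ a ∈ s, f a ∈ s) (hinv : ∀ a ∈ s, f (f a) = a)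
    (hp : ∀ a ∈ s, p (f a) ↔ ¬ p a) : #{a ∈ s | p a} = #{a ∈ s | ¬ p a} :=
  card_nbij' f f (fun a ha => by simp_all) (fun a ha => by simp_all)
    (fun a ha => hinv a (mem_filter.1 ha).1) (fun a ha => hinv a (mem_filter.1 ha).1)

theorem card_symmDiff_add_two_mul_card_inter [DecidableEq α] (s t : Finset α) :
    #(s ∆ t) + 2 * #(s ∩ t) = #s + #t := by
  have h : #(s ∆ t) + #(s ∩ t) = #(s ∪ t) := by
    have hdisj : Disjoint (s ∆ t) (s ∩ t) := disjoint_symmDiff_inf s t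
    rw [← card_union_of_disjoint hdisj]
    exact congrArg card (symmDiff_sup_inf s t)
  have := card_union_add_card_inter s t
  omega

end Parity

section ProductFilter

variable {α β : Type*} [DecidableEq α] [DecidableEq β] (p : α × β → Prop) [DecidablePred p]

theorem card_filter_union_product {s₁ s₂ : Finset α} (t : Finset β) (hs : Disjoint s₁ s₂) :
    #{x ∈ (s₁ ∪ s₂) ×ˢ t | p x} = #{x ∈ s₁ ×ˢ t | p x} + #{x ∈ s₂ ×ˢ t | p x} := by
  rw [union_product, filter_union,
    card_union_of_disjoint (disjoint_filter_filter (disjoint_product.2 (Or.inl hs)))]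

theorem card_filter_product_union (s : Finset α) {t₁ t₂ : Finset β} (ht : Disjoint t₁ t₂) :
    #{x ∈ s ×ˢ (t₁ ∪ t₂) | p x} = #{x ∈ s ×ˢ t₁ | p x} + #{x ∈ s ×ˢ t₂ | p x} := by
  rw [product_union, filter_union,
    card_union_of_disjoint (disjoint_filter_filter (disjoint_product.2 (Or.inr ht)))]

end ProductFilter

section Pairing

variable {n : ℕ} {τ : ℕ → ℕ} {X Y : Finset ℕ}

theorem IsPairing.apply_mem_iff (hτ : IsPairing n τ) (hXτ : Invariant X τ) {x : ℕ}
    (hx : x ∈ nodes n) : τ x ∈ X ↔ x ∈ X :=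
  ⟨fun h => hτ.invol x hx ▸ hXτ _ h, hXτ x⟩

theorem Invariant.sdiff (hτ : IsPairing n τ) (hXτ : Invariant X τ) :
    Invariant (nodes n \ X) τ := by
  intro x hx
  rw [mem_sdiff] at hx ⊢
  exact ⟨hτ.maps x hx.1, (hτ.apply_mem_iff hXτ hx.1).not.2 hx.2⟩

theorem Invariant.symmDiff (hτ : IsPairing n τ) (hX : X ⊆ nodes n) (hY : Y ⊆ nodes n)
    (hXτ : Invariant X τ) (hYτ : Invariant Y τ) : Invariant (X ∆ Y) τ := by
  intro x hx
  have hxn : x ∈ nodes n := union_subset hX hY (symmDiff_subset_union hx)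
  rw [mem_symmDiff] at hx ⊢
  rwa [hτ.apply_mem_iff hXτ hxn, hτ.apply_mem_iff hYτ hxn]

theorem IsPairing.even_card_of_invariant (hτ : IsPairing n τ) (hX : X ⊆ nodes n)
    (hXτ : Invariant X τ) : Even #X :=
  even_card_of_involution_s14 τ hXτ (fun x hx => hτ.invol x (hX hx)) (fun x hx => hτ.nofix x (hX hx))

end Pairing

def crossingsBetween (A B : Finset ℕ) (ρ : ℕ → ℕ) : Finset (ℕ × ℕ) :=
  {p ∈ A ×ˢ B | p.1 < p.2 ∧ p.2 < ρ p.1 ∧ ρ p.1 < ρ p.2}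

theorem numCrossingsOn_union {A B : Finset ℕ} (ρ : ℕ → ℕ) (hAB : Disjoint A B) :
    numCrossingsOn (A ∪ B) ρ = numCrossingsOn A ρ + numCrossingsOn B ρ
      + #(crossingsBetween A B ρ) + #(crossingsBetween B A ρ) := by
  unfold numCrossingsOn crossingsBetween
  rw [card_filter_union_product _ _ hAB, card_filter_product_union _ _ hAB,
    card_filter_product_union _ _ hAB]
  omega

theorem card_crossingsBetween_add_modEq {n : ℕ} {ρ : ℕ → ℕ} {A B : Finset ℕ}
    (hρ : IsPairing n ρ) (hA : A ⊆ nodes n) (hB : B ⊆ nodes n) (hAB : Disjoint A B) (hAρ : Invariant A ρ) (hBρ : Invariant B ρ) :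
    #(crossingsBetween A B ρ) + #(crossingsBetween B A ρ) ≡ #{p ∈ A ×ˢ B | p.1 < p.2} [MOD 2] := by
  have hA' : ∀ x ∈ A, ρ x ∈ A ∧ ρ (ρ x) = x ∧ ρ x ≠ x := fun x hx =>
    ⟨hAρ x hx, hρ.invol x (hA hx), hρ.nofix x (hA hx)⟩
  have hB' : ∀ x ∈ B, ρ x ∈ B ∧ ρ (ρ x) = x ∧ ρ x ≠ x := fun x hx =>
    ⟨hBρ x hx, hρ.invol x (hB hx), hρ.nofix x (hB hx)⟩
  have hne : ∀ x ∈ A, ∀ y ∈ B, x ≠ y := fun x hx y hy h => disjoint_left.1 hAB hx (h ▸ hy)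
  have h₁ : #{p ∈ A ×ˢ B | p.1 < p.2} ≡ #{p ∈ A ×ˢ B | ρ p.2 < p.1 ∧ p.1 < p.2} [MOD 2] := by
    refine card_modEq_of_involution_sdiff (monotone_filter_right _ fun _ _ h => h.2)
      (fun p => (p.1, ρ p.2)) ?_ ?_ ?_
    all_goals
      rintro ⟨a, b⟩ hp
      simp only [mem_sdiff, mem_filter, mem_product] at hp ⊢
      grind
  have h₂ : #{p ∈ A ×ˢ B | ρ p.2 < p.1 ∧ p.1 < p.2} ≡
      #{p ∈ A ×ˢ B | ρ p.2 < p.1 ∧ p.1 < p.2 ∧ (ρ p.1 < ρ p.2 ∨ p.2 < ρ p.1)} [MOD 2] := by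
    refine card_modEq_of_involution_sdiff (monotone_filter_right _ fun _ _ h => ⟨h.1, h.2.1⟩)
      (fun p => (ρ p.1, p.2)) ?_ ?_ ?_
    all_goals
      rintro ⟨a, b⟩ hp
      simp only [mem_sdiff, mem_filter, mem_product] at hp ⊢
      grind
  have h₃ : #{p ∈ A ×ˢ B | ρ p.2 < p.1 ∧ p.1 < p.2 ∧ (ρ p.1 < ρ p.2 ∨ p.2 < ρ p.1)} =
      #(crossingsBetween A B ρ) + #(crossingsBetween B A ρ) := by
    -- `a` lies under the chord `{ρ b, b}` and `ρ a` outside it: the two chords cross.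
    rw [← card_filter_add_card_filter_not (fun p => ρ p.1 < ρ p.2)]
    congr 1
    · refine card_nbij' (fun p => (ρ p.1, ρ p.2)) (fun p => (ρ p.1, ρ p.2)) ?_ ?_ ?_ ?_
      all_goals
        rintro ⟨a, b⟩ hp
        simp only [crossingsBetween, mem_coe, mem_filter, mem_product] at hp ⊢
        grind
    · refine card_nbij' (fun p => (ρ p.2, p.1)) (fun p => (p.2, ρ p.1)) ?_ ?_ ?_ ?_
      all_goals
        rintro ⟨a, b⟩ hp
        simp only [crossingsBetween, mem_coe, mem_filter, mem_product] at hp ⊢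
        grind
  rw [← h₃]
  exact (h₁.trans h₂).symm

theorem two_mul_choose_two_add (k : ℕ) : (2 * k).choose 2 + k = 2 * k ^ 2 := by
  rw [Nat.choose_two_right]
  rcases k with _ | m
  · rfl
  · rw [show 2 * (m + 1) - 1 = 2 * m + 1 by omega, mul_assoc, Nat.mul_div_cancel_left _ two_pos]
    ring

theorem card_filter_lt_nodes (n a : ℕ) : #{b ∈ nodes n | a < b} = 2 * n - a := by
  rw [show {b ∈ nodes n | a < b} = Ioc a (2 * n) by ext; simp [nodes]; omega, Nat.card_Ioc]

theorem card_filter_lt_product_nodes_modEq {n : ℕ} (S : Finset ℕ) (hS : S ⊆ nodes n) :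
    #{p ∈ S ×ˢ nodes n | p.1 < p.2} ≡ #{a ∈ S | a % 2 = 1} [MOD 2] := by
  rw [card_filter, sum_product, Nat.ModEq, sum_nat_mod, card_filter, sum_nat_mod]
  refine congrArg (· % 2) (sum_congr rfl fun a ha => ?_)
  have ha' := mem_Icc.1 (hS ha)
  rw [← card_filter, card_filter_lt_nodes]
  split_ifs <;> omega

theorem card_filter_lt_product_sdiff_modEq {n : ℕ} {S : Finset ℕ} (hS : S ⊆ nodes n)
    (hSeven : Even #S) :
    #{p ∈ S ×ˢ (nodes n \ S) | p.1 < p.2} ≡ #{a ∈ S | a % 2 = 1} + #S / 2 [MOD 2] := by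
  have hsplit : #{p ∈ S ×ˢ nodes n | p.1 < p.2} =
      (#S).choose 2 + #{p ∈ S ×ˢ (nodes n \ S) | p.1 < p.2} := by
    conv_lhs => rw [← union_sdiff_of_subset hS]
    rw [card_filter_product_union _ _ disjoint_sdiff, card_product_filter_lt]
  have hrow := card_filter_lt_product_nodes_modEq S hS
  obtain ⟨k, hk⟩ := even_iff_two_dvd.1 hSeven
  have hchoose := two_mul_choose_two_add k
  rw [hk] at hsplit ⊢
  unfold Nat.ModEq at *
  omega

theorem numCrossings_modEq {n : ℕ} {ρ : ℕ → ℕ} {S : Finset ℕ} (hρ : IsPairing n ρ)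
    (hS : S ⊆ nodes n) (hSρ : Invariant S ρ) :
    numCrossings n ρ ≡ numCrossingsOn S ρ + numCrossingsOn (nodes n \ S) ρ
      + #{a ∈ S | a % 2 = 1} + #S / 2 [MOD 2] := by
  have hmixed := (card_crossingsBetween_add_modEq hρ hS sdiff_subset disjoint_sdiff hSρ
    (hSρ.sdiff hρ)).trans (card_filter_lt_product_sdiff_modEq hS (hρ.even_card_of_invariant hS hSρ))
  rw [numCrossings, ← union_sdiff_of_subset hS, numCrossingsOn_union ρ disjoint_sdiff,
    union_sdiff_of_subset hS]
  unfold Nat.ModEq at hmixed ⊢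
  omega

section Tset

variable {n : ℕ} {c : ℕ → Bool} {S : Finset ℕ}

theorem card_inter_Tset_modEq (hS : S ⊆ nodes n) :
    #(S ∩ Tset n c) ≡ #{i ∈ S | i % 2 = 1} + #{i ∈ S | c i = true} [MOD 2] := by
  have hT : S ∩ Tset n c = {i ∈ S | i % 2 = 1} ∆ {i ∈ S | c i = true} := by
    ext i
    simp only [Tset, mem_inter, mem_filter, mem_symmDiff]
    have := @hS i
    cases c i <;> grind
  rw [Nat.ModEq, ← card_symmDiff_add_two_mul_card_inter, ← hT]
  simp

theorem BalancedSubset.card_div_two (hbal : BalancedSubset c S) :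
    #S / 2 = #{i ∈ S | c i = true} := by
  have := card_filter_add_card_filter_not (s := S) (fun i => c i = true)
  simp only [Bool.not_eq_true] at this
  rw [BalancedSubset] at hbal
  omega

theorem numCrossings_modEq_card_inter_Tset {ρ : ℕ → ℕ} (hρ : IsPairing n ρ) (hS : S ⊆ nodes n)
    (hbal : BalancedSubset c S) (hSρ : Invariant S ρ) (h₀ : numCrossingsOn S ρ = 0)
    (h₀' : numCrossingsOn (nodes n \ S) ρ = 0) : numCrossings n ρ ≡ #(S ∩ Tset n c) [MOD 2] := by
  have h := numCrossings_modEq hρ hS hSρ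
  rw [h₀, h₀', hbal.card_div_two, zero_add, zero_add] at h
  exact h.trans (card_inter_Tset_modEq hS).symm

theorem even_card_inter_Tset {π ρ : ℕ → ℕ} (hπ : IsPairing n π) (hπoe : IsOE n π)
    (hρ : IsPairing n ρ) (hρbw : IsBW n c ρ) (hS : S ⊆ nodes n) (hSπ : Invariant S π)
    (hSρ : Invariant S ρ) : Even #(S ∩ Tset n c) := by
  have hodd : #{i ∈ S | i % 2 = 1} = #{i ∈ S | ¬ i % 2 = 1} :=
    card_filter_eq_card_filter_not_of_involution S _ π hSπ (fun i hi => hπ.invol i (hS hi))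
      (fun i hi => by have := hπoe i (hS hi); omega)
  have hblack : #{i ∈ S | c i = true} = #{i ∈ S | ¬ c i = true} :=
    card_filter_eq_card_filter_not_of_involution S _ ρ hSρ (fun i hi => hρ.invol i (hS hi))
      (fun i hi => by rw [hρbw i (hS hi)]; cases c i <;> simp)
  have h₁ := card_filter_add_card_filter_not (s := S) (fun i => i % 2 = 1)
  have h₂ := card_filter_add_card_filter_not (s := S) (fun i => c i = true)
  have hT := card_inter_Tset_modEq (c := c) hS
  rw [Nat.even_iff]
  unfold Nat.ModEq at hT
  omega

theorem card_inter_Tset_modEq_of_invariant {π ρ : ℕ → ℕ} (hπ : IsPairing n π)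
    (hπoe : IsOE n π) (hρ : IsPairing n ρ) (hρbw : IsBW n c ρ) {S₁ S₂ : Finset ℕ}
    (hS₁ : S₁ ⊆ nodes n) (hS₂ : S₂ ⊆ nodes n) (hρS₁ : Invariant S₁ ρ) (hρS₂ : Invariant S₂ ρ)
    (hπS₁ : Invariant (S₁ ∆ Tset n c) π) (hπS₂ : Invariant (S₂ ∆ Tset n c) π) :
    #(S₁ ∩ Tset n c) ≡ #(S₂ ∩ Tset n c) [MOD 2] := by
  have hT : Tset n c ⊆ nodes n := filter_subset _ _
  have hD : S₁ ∆ S₂ ⊆ nodes n := symmDiff_subset_union.trans (union_subset hS₁ hS₂)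
  have hDπ : Invariant (S₁ ∆ S₂) π := by
    have := hπS₁.symmDiff hπ (symmDiff_subset_union.trans (union_subset hS₁ hT))
      (symmDiff_subset_union.trans (union_subset hS₂ hT)) hπS₂
    rwa [symmDiff_symmDiff_symmDiff_comm, symmDiff_self, symmDiff_bot] at this
  obtain ⟨k, hk⟩ := even_card_inter_Tset hπ hπoe hρ hρbw hD hDπ (hρS₁.symmDiff hρ hS₁ hS₂ hρS₂)
  have hDT : S₁ ∆ S₂ ∩ Tset n c = (S₁ ∩ Tset n c) ∆ (S₂ ∩ Tset n c) :=
    inf_symmDiff_distrib_right _ _ _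
  have := card_symmDiff_add_two_mul_card_inter (S₁ ∩ Tset n c) (S₂ ∩ Tset n c)
  rw [← hDT] at this
  unfold Nat.ModEq
  omega

end Tset

theorem statement14_general (n : ℕ) (c : ℕ → Bool)
    (π ρ : ℕ → ℕ) (hπ : IsPairing n π) (hπoe : IsOE n π)
    (hρ : IsPairing n ρ) (hρbw : IsBW n c ρ)
    (S₁ S₂ : Finset ℕ) (hS₁ : S₁ ⊆ nodes n) (hS₂ : S₂ ⊆ nodes n)
    (hS₁bal : BalancedSubset c S₁) (hS₂bal : BalancedSubset c S₂)
    (hρS₁ : Invariant S₁ ρ) (hρS₂ : Invariant S₂ ρ)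
    (hπS₁ : Invariant (symmDiff S₁ (Tset n c)) π)
    (hπS₂ : Invariant (symmDiff S₂ (Tset n c)) π)
    (ρ₁ ρ₂ : ℕ → ℕ)
    (hρ₁ : IsPairing n ρ₁) (hρ₁inv : Invariant S₁ ρ₁)
    (h₁S : numCrossingsOn S₁ ρ₁ = 0) (h₁Sc : numCrossingsOn (nodes n \ S₁) ρ₁ = 0)
    (hρ₂ : IsPairing n ρ₂) (hρ₂inv : Invariant S₂ ρ₂)
    (h₂S : numCrossingsOn S₂ ρ₂ = 0) (h₂Sc : numCrossingsOn (nodes n \ S₂) ρ₂ = 0) :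
    numCrossings n ρ₁ % 2 = numCrossings n ρ₂ % 2 :=
  (numCrossings_modEq_card_inter_Tset hρ₁ hS₁ hS₁bal hρ₁inv h₁S h₁Sc).trans <|
    (card_inter_Tset_modEq_of_invariant hπ hπoe hρ hρbw hS₁ hS₂ hρS₁ hρS₂ hπS₁ hπS₂).trans
      (numCrossings_modEq_card_inter_Tset hρ₂ hS₂ hS₂bal hρ₂inv h₂S h₂Sc).symm

/-- Corollary 2.3.8: the parity of the number of crossings of a
black-white pairing preserving `Sᵢ` and planar on `Sᵢ` and its complement is the same for
two balanced sets `S₁`, `S₂` compatible with the same `π` and `ρ`. -/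
theorem statement14 (n : ℕ) (c : ℕ → Bool) (hbal : BalancedColoring n c)
    (π ρ : ℕ → ℕ) (hπ : IsPairing n π) (hπoe : IsOE n π)
    (hρ : IsPairing n ρ) (hρbw : IsBW n c ρ)
    (S₁ S₂ : Finset ℕ) (hS₁ : S₁ ⊆ nodes n) (hS₂ : S₂ ⊆ nodes n)
    (hS₁bal : BalancedSubset c S₁) (hS₂bal : BalancedSubset c S₂)
    (hρS₁ : Invariant S₁ ρ) (hρS₂ : Invariant S₂ ρ)
    (hπS₁ : Invariant (symmDiff S₁ (Tset n c)) π)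
    (hπS₂ : Invariant (symmDiff S₂ (Tset n c)) π)
    (ρ₁ ρ₂ : ℕ → ℕ)
    (hρ₁ : IsPairing n ρ₁) (hρ₁bw : IsBW n c ρ₁) (hρ₁inv : Invariant S₁ ρ₁)
    (h₁S : numCrossingsOn S₁ ρ₁ = 0) (h₁Sc : numCrossingsOn (nodes n \ S₁) ρ₁ = 0)
    (hρ₂ : IsPairing n ρ₂) (hρ₂bw : IsBW n c ρ₂) (hρ₂inv : Invariant S₂ ρ₂)
    (h₂S : numCrossingsOn S₂ ρ₂ = 0) (h₂Sc : numCrossingsOn (nodes n \ S₂) ρ₂ = 0) :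
    numCrossings n ρ₁ % 2 = numCrossings n ρ₂ % 2 :=
  statement14_general n c π ρ hπ hπoe hρ hρbw S₁ S₂ hS₁ hS₂ hS₁bal hS₂bal hρS₁ hρS₂ hπS₁ hπS₂ ρ₁ ρ₂
    hρ₁ hρ₁inv h₁S h₁Sc hρ₂ hρ₂inv h₂S h₂Sc

end DD
end

section
/- (Desnanot–Jacobi identity) Let M be an n×n matrix over a commutative ring with n ≥ 2, and let 1 ≤ i < j ≤ n. Then det(M) · det(M_{i,j}^{i,j}) = det(M_i^i) · det(M_j^j) − det(M_i^j) · det(M_j^i). -/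
/-!
Let `N` be the identity matrix with its columns `i` and `j` replaced by the corresponding columns
of `adj M`. Then `det N = adj(M)ᵢᵢ adj(M)ⱼⱼ - adj(M)ᵢⱼ adj(M)ⱼᵢ`, which is the right-hand side,
while `M * N` is `M` with columns `i`, `j` replaced by `det M • eᵢ` and `det M • eⱼ`, whose
determinant is `det(M)² det(M_{ij}^{ij})`. So both sides agree after multiplication by `det M`.
This factor is cancelled for the generic matrix over `ℤ[x_kl]`, where it is a non-zero-divisor,
and the identity then specializes to every commutative ring.
-/

namespace DD

/-- The matrix obtained from `M` by deleting row `i` and column `j`. -/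
def delRC {R : Type*} [CommRing R] {m : ℕ} (M : Matrix (Fin (m + 1)) (Fin (m + 1)) R)
    (i j : Fin (m + 1)) : Matrix (Fin m) (Fin m) R :=
  M.submatrix i.succAbove j.succAbove

/-- The matrix obtained from `M` by deleting rows `i`, `j` and columns `i`, `j`
(for `i < j`): first delete row/column `j`, then row/column `i`. -/
def delRC2 {R : Type*} [CommRing R] {m : ℕ} (M : Matrix (Fin (m + 2)) (Fin (m + 2)) R)
    (i j : Fin (m + 2)) (h : i < j) : Matrix (Fin m) (Fin m) R :=
  delRC (delRC M j j)
    ⟨i.val, lt_of_lt_of_le (Fin.lt_def.mp h) (Nat.lt_succ_iff.mp j.isLt)⟩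
    ⟨i.val, lt_of_lt_of_le (Fin.lt_def.mp h) (Nat.lt_succ_iff.mp j.isLt)⟩

end DD

theorem Equiv.Perm.eq_one_or_eq_swap_of_forall_ne {α : Type*} [DecidableEq α]
    (σ : Equiv.Perm α) {i j : α} (hfix : ∀ l, l ≠ i → l ≠ j → σ l = l) :
    σ = 1 ∨ σ = Equiv.swap i j := by
  have hpair : ∀ l, l = i ∨ l = j → σ l = i ∨ σ l = j := fun l hl => by
    by_contra! h
    have := σ.injective (hfix (σ l) h.1 h.2)
    grind
  have hinj := σ.injective.eq_iff (a := i) (b := j)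
  rcases hpair i (.inl rfl) with hi | hi
  · left
    ext l
    by_cases l = i <;> by_cases l = j <;> grind [Equiv.Perm.one_apply]
  · right
    ext l
    by_cases l = i <;> by_cases l = j <;> grind

namespace Matrix

variable {R : Type*} [CommRing R]

theorem det_one_updateCol_updateCol {n : Type*} [Fintype n] [DecidableEq n] {i j : n}
    (hij : i ≠ j) (b c : n → R) :
    (((1 : Matrix n n R).updateCol i b).updateCol j c).det = b i * c j - c i * b j := by
  set N := ((1 : Matrix n n R).updateCol i b).updateCol j c
  have hNi : ∀ k, N k i = b k := fun k => by simp [N, hij]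
  have hNj : ∀ k, N k j = c k := fun k => by simp [N]
  have hN : ∀ k l, l ≠ i → l ≠ j → N k l = (1 : Matrix n n R) k l := fun k l hi hj => by
    simp [N, hi, hj]
  rw [det_apply,
    Fintype.sum_eq_add 1 (Equiv.swap i j) (Ne.symm <| mt Equiv.swap_eq_one_iff.mp hij)]
  · rw [Fintype.prod_eq_mul i j hij, Fintype.prod_eq_mul i j hij]
    · simp only [Equiv.Perm.sign_one, Equiv.Perm.coe_one, id_eq, hNi, hNj, one_smul,
        Equiv.Perm.sign_swap hij, Equiv.swap_apply_left, Equiv.swap_apply_right, Units.neg_smul]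
      ring
    · intro l hl
      rw [Equiv.swap_apply_of_ne_of_ne hl.1 hl.2, hN _ _ hl.1 hl.2, one_apply_eq]
    · intro l hl
      rw [Equiv.Perm.one_apply, hN _ _ hl.1 hl.2, one_apply_eq]
  · intro σ hσ
    obtain ⟨l, hli, hlj, hl⟩ : ∃ l, l ≠ i ∧ l ≠ j ∧ σ l ≠ l := by
      by_contra! h
      exact (σ.eq_one_or_eq_swap_of_forall_ne h).elim hσ.1 hσ.2
    rw [Finset.prod_eq_zero (Finset.mem_univ l) (by rw [hN _ _ hli hlj, one_apply_ne hl]),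
      smul_zero]

theorem submatrix_updateCol_single_of_injective {n p : Type*} [DecidableEq n] [DecidableEq p]
    (A : Matrix n n R) {f : p → n} (hf : f.Injective) (k : p) :
    (A.updateCol (f k) (Pi.single (f k) 1)).submatrix f f
      = (A.submatrix f f).updateCol k (Pi.single k 1) := by
  ext a b
  simp [updateCol_apply, Pi.single_apply, hf.eq_iff]

theorem det_updateCol_single_self {m : ℕ} (A : Matrix (Fin (m + 1)) (Fin (m + 1)) R)
    (k : Fin (m + 1)) :
    (A.updateCol k (Pi.single k 1)).det = (A.submatrix k.succAbove k.succAbove).det := by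
  rw [← det_transpose, ← updateRow_transpose, ← adjugate_apply,
    adjugate_fin_succ_eq_det_submatrix, ← two_mul, pow_mul, neg_one_sq, one_pow, one_mul,
    ← transpose_submatrix, det_transpose]

end Matrix

namespace DD

open Matrix

section

variable {R : Type*} [CommRing R] {m : ℕ}

theorem delRC2_eq_delRC_castPred (M : Matrix (Fin (m + 2)) (Fin (m + 2)) R) {i j : Fin (m + 2)}
    (h : i < j) :
    delRC2 M i j h
      = delRC (delRC M j j) (i.castPred (Fin.ne_last_of_lt h)) (i.castPred (Fin.ne_last_of_lt h)) :=
  rfl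

theorem adjugate_self_eq_det_delRC (M : Matrix (Fin (m + 1)) (Fin (m + 1)) R) (i : Fin (m + 1)) :
    adjugate M i i = (delRC M i i).det := by
  rw [adjugate_fin_succ_eq_det_submatrix, ← two_mul, pow_mul, neg_one_sq, one_pow, one_mul]
  rfl

theorem adjugate_mul_adjugate_swap_eq (M : Matrix (Fin (m + 1)) (Fin (m + 1)) R)
    (i j : Fin (m + 1)) :
    adjugate M i j * adjugate M j i = (delRC M i j).det * (delRC M j i).det := by
  rw [adjugate_fin_succ_eq_det_submatrix, adjugate_fin_succ_eq_det_submatrix, mul_mul_mul_comm,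
    ← pow_add, add_comm (j : ℕ), ← two_mul, pow_mul, neg_one_sq, one_pow, one_mul, mul_comm]
  rfl

/-- Jacobi's theorem on the minors of the adjugate, for a `2 × 2` principal minor. -/
theorem det_mul_adjugate_minor (M : Matrix (Fin (m + 2)) (Fin (m + 2)) R) {i j : Fin (m + 2)}
    (h : i < j) :
    M.det * (adjugate M i i * adjugate M j j - adjugate M i j * adjugate M j i)
      = M.det * (M.det * (delRC2 M i j h).det) := by
  set i' := i.castPred (Fin.ne_last_of_lt h)
  set N := ((1 : Matrix _ _ R).updateCol i (M.cramer (Pi.single i 1))).updateCol j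
    (M.cramer (Pi.single j 1))
  have hdetN : N.det = adjugate M i i * adjugate M j j - adjugate M i j * adjugate M j i := by
    simp only [N, det_one_updateCol_updateCol h.ne, cramer_eq_adjugate_mulVec, mulVec_single_one]
    rfl
  calc M.det * (adjugate M i i * adjugate M j j - adjugate M i j * adjugate M j i)
      = (M * N).det := by rw [det_mul, hdetN]
    _ = ((M.updateCol i (M.det • Pi.single i 1)).updateCol j (M.det • Pi.single j 1)).det := by
      rw [mul_updateCol, mul_updateCol, mul_one, mulVec_cramer, mulVec_cramer]
    _ = M.det * (M.det * (delRC2 M i j h).det) := by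
      have hsub : (M.updateCol i (Pi.single i 1)).submatrix j.succAbove j.succAbove
          = (delRC M j j).updateCol i' (Pi.single i' 1) := by
        rw [delRC, ← submatrix_updateCol_single_of_injective _ Fin.succAbove_right_injective,
          Fin.succAbove_castPred_of_lt j i h]
      rw [det_updateCol_smul, updateCol_comm _ h.ne, det_updateCol_smul,
        updateCol_comm _ h.ne.symm, det_updateCol_single_self, hsub, det_updateCol_single_self,
        delRC2_eq_delRC_castPred]
      rfl

theorem desnanot_jacobi_of_isLeftRegular (M : Matrix (Fin (m + 2)) (Fin (m + 2)) R)
    (hM : IsLeftRegular M.det) {i j : Fin (m + 2)} (h : i < j) :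
    M.det * (delRC2 M i j h).det
      = (delRC M i i).det * (delRC M j j).det - (delRC M i j).det * (delRC M j i).det := by
  refine (hM (?_ : M.det * _ = M.det * _)).symm
  rw [← adjugate_self_eq_det_delRC, ← adjugate_self_eq_det_delRC,
    ← adjugate_mul_adjugate_swap_eq, det_mul_adjugate_minor M h]

theorem map_delRC {S : Type*} [CommRing S] (f : R →+* S)
    (M : Matrix (Fin (m + 1)) (Fin (m + 1)) R) (i j : Fin (m + 1)) :
    (delRC M i j).map f = delRC (M.map f) i j :=
  rfl

theorem map_delRC2 {S : Type*} [CommRing S] (f : R →+* S)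
    (M : Matrix (Fin (m + 2)) (Fin (m + 2)) R) {i j : Fin (m + 2)} (h : i < j) :
    (delRC2 M i j h).map f = delRC2 (M.map f) i j h :=
  rfl

end

/-- Desnanot–Jacobi identity: for an `n × n` matrix `M` with `n ≥ 2`
and `1 ≤ i < j ≤ n`,
`det(M) · det(M_{i,j}^{i,j}) = det(M_i^i) · det(M_j^j) − det(M_i^j) · det(M_j^i)`. -/
theorem statement16 {R : Type*} [CommRing R] {m : ℕ}
    (M : Matrix (Fin (m + 2)) (Fin (m + 2)) R) (i j : Fin (m + 2)) (h : i < j) :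
    M.det * (delRC2 M i j h).det
      = (delRC M i i).det * (delRC M j j).det
        - (delRC M i j).det * (delRC M j i).det := by
  let X := mvPolynomialX (Fin (m + 2)) (Fin (m + 2)) ℤ
  let φ := MvPolynomial.eval₂Hom (Int.castRingHom R)
    fun p : Fin (m + 2) × Fin (m + 2) => M p.1 p.2
  have hX : IsLeftRegular X.det := (IsRegular.of_ne_zero (det_mvPolynomialX_ne_zero _ _)).left
  have key := congrArg φ (desnanot_jacobi_of_isLeftRegular X hX h)
  simp only [map_mul, map_sub, RingHom.map_det, RingHom.mapMatrix_apply, map_delRC,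
    map_delRC2] at key
  rwa [show X.map φ = M from mvPolynomialX_map_eval₂ _ M] at key

end DD
end
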